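/- arXiv:2503.02366 — 3 statements merged into one kernel-verified Lean document; each statement's English description precedes it below -/
import Mathlib

section
/- For all nonnegative integers n, p(7n + 5) ≡ 0 (mod 7), where p(n) is the number of partitions of n. -/
open PowerSeries

/-- `p n` is the number of partitions of `n`. -/
noncomputable def p (n : ℕ) : ℕ := Nat.card (Nat.Partition n)

/-- `b ℓ n` is the number of `ℓ`-regular partitions of `n`,
i.e. partitions of `n` with no part divisible by `ℓ`. -/
noncomputable def b (ℓ n : ℕ) : ℕ := Nat.card {q : Nat.Partition n // ∀ i ∈ q.parts, ¬ ℓ ∣ i}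

/-- `f r = ∏_{m ≥ 1} (1 - q^{r m})` as a formal power series over `ℚ`
(defined coefficientwise via the stabilizing finite partial products). -/
noncomputable def f (r : ℕ) : PowerSeries ℚ :=
  PowerSeries.mk fun n =>
    PowerSeries.coeff (R := ℚ) n (∏ m ∈ Finset.Icc 1 n, (1 - (PowerSeries.X : PowerSeries ℚ) ^ (r * m)))


namespace Rama
noncomputable section
open Finset
open Finset.HasAntidiagonal
open scoped Classical


/-- coefficients agree up to degree `n` -/
def Eqc {R : Type*} [Semiring R] (n : ℕ) (f g : PowerSeries R) : Prop :=
  ∀ u ≤ n, coeff (R := R) u f = coeff (R := R) u g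

theorem Eqc.refl {R : Type*} [Semiring R] (n : ℕ) (f : PowerSeries R) : Eqc n f f :=
  fun _ _ => rfl

theorem Eqc.symm {R : Type*} [Semiring R] {n : ℕ} {f g : PowerSeries R} (h : Eqc n f g) :
    Eqc n g f := fun u hu => (h u hu).symm

theorem Eqc.trans {R : Type*} [Semiring R] {n : ℕ} {f g h : PowerSeries R}
    (h1 : Eqc n f g) (h2 : Eqc n g h) : Eqc n f h := fun u hu => (h1 u hu).trans (h2 u hu)

theorem Eqc.mul {R : Type*} [CommSemiring R] {n : ℕ} {f g f' g' : PowerSeries R}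
    (hf : Eqc n f f') (hg : Eqc n g g') : Eqc n (f * g) (f' * g') := by
  intro u hu
  rw [coeff_mul, coeff_mul]
  refine Finset.sum_congr rfl ?_
  rintro ⟨a, b⟩ hab
  rw [Finset.HasAntidiagonal.mem_antidiagonal] at hab
  rw [hf a (le_trans (by omega) hu), hg b (le_trans (by omega) hu)]

theorem Eqc.pow {R : Type*} [CommSemiring R] {n : ℕ} {f f' : PowerSeries R}
    (hf : Eqc n f f') (k : ℕ) : Eqc n (f ^ k) (f' ^ k) := by
  induction k with
  | zero => simpa using Eqc.refl n 1
  | succ k ih => rw [pow_succ, pow_succ]; exact ih.mul hf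

theorem Eqc.of_le {R : Type*} [Semiring R] {n m : ℕ} {f g : PowerSeries R}
    (h : Eqc n f g) (hmn : m ≤ n) : Eqc m f g := fun u hu => h u (le_trans hu hmn)

/-- cancellation: if constant coeff of `f` is a unit (here: 1) -/
theorem Eqc.cancel {R : Type*} [CommRing R] {n : ℕ} {f g h : PowerSeries R}
    (hf : constantCoeff (R := R) f = 1) (H : Eqc n (f * g) (f * h)) : Eqc n g h := by
  intro u hu
  induction u using Nat.strong_induction_on with
  | _ u ih =>
    have := H u hu
    rw [coeff_mul, coeff_mul] at this
    rw [Finset.Nat.sum_antidiagonal_eq_sum_range_succ_mk, Finset.Nat.sum_antidiagonal_eq_sum_range_succ_mk] at this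
    rw [Finset.sum_range_succ', Finset.sum_range_succ'] at this
    simp only [Nat.sub_zero] at this
    have hco : (coeff (R := R) 0) f = 1 := by rwa [PowerSeries.coeff_zero_eq_constantCoeff]
    rw [hco] at this
    have hsum : ∑ i ∈ Finset.range u, (coeff (R := R) (i+1)) f * (coeff (R := R) (u - (i+1))) g
        = ∑ i ∈ Finset.range u, (coeff (R := R) (i+1)) f * (coeff (R := R) (u - (i+1))) h := by
      refine Finset.sum_congr rfl fun i hi => ?_
      rw [Finset.mem_range] at hi
      rw [ih (u - (i+1)) (by omega) (by omega)]
    rw [hsum] at this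
    simpa using this


open Finset.HasAntidiagonal
open scoped Classical

variable {α : Type*}

def indicatorSeries (α : Type*) [Semiring α] (s : Set ℕ) : PowerSeries α :=
  PowerSeries.mk fun n => if n ∈ s then 1 else 0

theorem coeff_indicator (s : Set ℕ) [Semiring α] (n : ℕ) :
    coeff (R := α) n (indicatorSeries _ s) = if n ∈ s then 1 else 0 :=
  coeff_mk _ _

theorem constantCoeff_indicator (s : Set ℕ) [Semiring α] :
    constantCoeff (R := α) (indicatorSeries _ s) = if 0 ∈ s then 1 else 0 :=
  rfl

theorem num_series' [Field α] (i : ℕ) :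
    (1 - (X : PowerSeries α) ^ (i + 1))⁻¹ = indicatorSeries α {k | i + 1 ∣ k} := by
  rw [PowerSeries.inv_eq_iff_mul_eq_one]
  · ext n
    cases n with
    | zero => simp [mul_sub, zero_pow, constantCoeff_indicator]
    | succ n =>
      simp only [coeff_one, if_false, mul_sub, mul_one, coeff_indicator,
        LinearMap.map_sub, reduceCtorEq]
      simp_rw [coeff_mul, coeff_X_pow, coeff_indicator, @boole_mul _ _ _ _]
      simp only [Set.mem_setOf_eq]; rw [sum_ite, sum_ite]
      simp_rw [@filter_filter _ _ _ _ _, sum_const_zero, add_zero, sum_const, nsmul_eq_mul, mul_one,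
        sub_eq_iff_eq_add, zero_add]
      symm
      split_ifs with h
      · suffices #{a ∈ antidiagonal (n + 1) | i + 1 ∣ a.fst ∧ a.snd = i + 1} = 1 by
          convert congr_arg ((↑) : ℕ → α) this; norm_cast
        rw [card_eq_one]
        cases' h with p hp
        refine ⟨((i + 1) * (p - 1), i + 1), ?_⟩
        ext ⟨a₁, a₂⟩
        simp only [mem_filter, Prod.mk_inj, HasAntidiagonal.mem_antidiagonal, mem_singleton]
        constructor
        · rintro ⟨a_left, ⟨a, rfl⟩, rfl⟩
          refine ⟨?_, rfl⟩
          rw [Nat.mul_sub_left_distrib, ← hp, ← a_left, mul_one, Nat.add_sub_cancel]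
        · rintro ⟨rfl, rfl⟩
          match p with
          | 0 => rw [mul_zero] at hp; cases hp
          | p + 1 => rw [hp]; simp [mul_add]
      · suffices #{a ∈ antidiagonal (n + 1) | i + 1 ∣ a.fst ∧ a.snd = i + 1} = 0 by
          convert congr_arg ((↑) : ℕ → α) this; norm_cast
        rw [card_eq_zero]
        apply eq_empty_of_forall_notMem
        simp only [Prod.forall, mem_filter, not_and, HasAntidiagonal.mem_antidiagonal]
        rintro _ h₁ h₂ ⟨a, rfl⟩ rfl
        apply h
        simp [← h₂]
  · simp [zero_pow]

-- The main workhorse of the partition theorem proof (from Archive).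
theorem partialGF_prop (α : Type*) [CommSemiring α] (n : ℕ) (s : Finset ℕ) (hs : ∀ i ∈ s, 0 < i)
    (c : ℕ → Set ℕ) (hc : ∀ i, i ∉ s → 0 ∈ c i) :
    #{p : n.Partition | (∀ j, p.parts.count j ∈ c j) ∧ ∀ j ∈ p.parts, j ∈ s} =
      coeff (R := α) n (∏ i ∈ s, indicatorSeries α ((· * i) '' c i)) := by
  simp_rw [coeff_prod, coeff_indicator, prod_boole, sum_boole]
  apply congr_arg
  simp only [mem_univ, forall_true_left, not_and, not_forall, exists_prop,
    Set.mem_image, not_exists]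
  set φ : (a : Nat.Partition n) →
    a ∈ filter (fun p ↦ (∀ (j : ℕ), Multiset.count j p.parts ∈ c j) ∧ ∀ j ∈ p.parts, j ∈ s) univ →
    ℕ →₀ ℕ := fun p _ => {
      toFun := fun i => Multiset.count i p.parts • i
      support := Finset.filter (fun i => i ≠ 0) p.parts.toFinset
      mem_support_toFun := fun a => by
        simp only [smul_eq_mul, ne_eq, mul_eq_zero, Multiset.count_eq_zero]
        rw [not_or, not_not]
        simp only [Multiset.mem_toFinset, not_not, mem_filter] }
  refine Finset.card_bij φ ?_ ?_ ?_
  · intro a ha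
    simp only [φ, not_forall, not_exists, not_and, exists_prop, mem_filter]
    rw [mem_finsuppAntidiag]
    dsimp only [ne_eq, smul_eq_mul, id_eq, eq_mpr_eq_cast, le_eq_subset, Finsupp.coe_mk]
    simp only [mem_univ, forall_true_left, not_and, not_forall, exists_prop,
      mem_filter, true_and] at ha
    refine ⟨⟨?_, fun i ↦ ?_⟩, fun i _ ↦ ⟨a.parts.count i, ha.1 i, rfl⟩⟩
    · conv_rhs => simp [← a.parts_sum]
      rw [sum_multiset_count_of_subset _ s]
      · simp only [smul_eq_mul]
      · intro i
        simp only [Multiset.mem_toFinset, not_not, mem_filter]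
        apply ha.2
    · simp only [ne_eq, Multiset.mem_toFinset, not_not, mem_filter, and_imp]
      exact fun hi _ ↦ ha.2 i hi
  · intro p₁ hp₁ p₂ hp₂ h
    apply Nat.Partition.ext
    simp only [true_and, mem_univ, mem_filter] at hp₁ hp₂
    ext i
    simp only [φ, ne_eq, Multiset.mem_toFinset, not_not, smul_eq_mul, Finsupp.mk.injEq] at h
    by_cases hi : i = 0
    · rw [hi]
      rw [Multiset.count_eq_zero_of_notMem]
      · rw [Multiset.count_eq_zero_of_notMem]
        intro a; exact Nat.lt_irrefl 0 (hs 0 (hp₂.2 0 a))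
      intro a; exact Nat.lt_irrefl 0 (hs 0 (hp₁.2 0 a))
    · rw [← mul_left_inj' hi]
      rw [funext_iff] at h
      exact h.2 i
  · simp only [φ, mem_filter, mem_finsuppAntidiag, mem_univ, exists_prop, true_and, and_assoc]
    rintro f ⟨hf, hf₃, hf₄⟩
    have hf' : f ∈ finsuppAntidiag s n := mem_finsuppAntidiag.mpr ⟨hf, hf₃⟩
    simp only [mem_finsuppAntidiag] at hf'
    refine ⟨⟨∑ i ∈ s, Multiset.replicate (f i / i) i, ?_, ?_⟩, ?_, ?_, ?_⟩
    · intro i hi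
      simp only [exists_prop, Multiset.mem_sum, mem_map, Function.Embedding.coeFn_mk] at hi
      rcases hi with ⟨t, ht, z⟩
      apply hs
      rwa [Multiset.eq_of_mem_replicate z]
    · simp_rw [Multiset.sum_sum, Multiset.sum_replicate, Nat.nsmul_eq_mul]
      rw [← hf'.1]
      refine sum_congr rfl fun i hi => Nat.div_mul_cancel ?_
      rcases hf₄ i hi with ⟨w, _, hw₂⟩
      rw [← hw₂]
      exact dvd_mul_left _ _
    · intro i
      simp_rw [Multiset.count_sum', Multiset.count_replicate, sum_ite_eq']
      split_ifs with h
      · rcases hf₄ i h with ⟨w, hw₁, hw₂⟩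
        rwa [← hw₂, Nat.mul_div_cancel _ (hs i h)]
      · exact hc _ h
    · intro i hi
      rw [Multiset.mem_sum] at hi
      rcases hi with ⟨j, hj₁, hj₂⟩
      rwa [Multiset.eq_of_mem_replicate hj₂]
    · ext i
      simp_rw [Multiset.count_sum', Multiset.count_replicate, sum_ite_eq']
      simp only [ne_eq, Multiset.mem_toFinset, not_not, smul_eq_mul, ite_mul,
        zero_mul, Finsupp.coe_mk]
      split_ifs with h
      · apply Nat.div_mul_cancel
        rcases hf₄ i h with ⟨w, _, hw₂⟩
        apply Dvd.intro_left _ hw₂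
      · apply symm
        rw [← Finsupp.notMem_support_iff]
        exact notMem_mono hf'.2 h



/-- partition generating function: partial products -/
theorem p_eq_coeff_prod_inv (n m : ℕ) (h : n ≤ m) :
    (p n : ℚ) = coeff (R := ℚ) n (∏ i ∈ range m, (1 - (X : PowerSeries ℚ) ^ (i + 1))⁻¹) := by
  have key := partialGF_prop ℚ n ((range m).map ⟨Nat.succ, Nat.succ_injective⟩)
    (by rintro i hi; simp only [mem_map] at hi; obtain ⟨a, -, rfl⟩ := hi; exact Nat.succ_pos a)
    (fun _ => Set.univ) (fun _ _ => trivial)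
  rw [Finset.prod_map] at key
  have h2 : ∀ i ∈ range m,
      indicatorSeries ℚ ((· * (⟨Nat.succ, Nat.succ_injective⟩ : ℕ ↪ ℕ) i) '' Set.univ)
        = (1 - (X : PowerSeries ℚ) ^ (i + 1))⁻¹ := by
    intro i _
    rw [num_series']
    have hset : ((· * (⟨Nat.succ, Nat.succ_injective⟩ : ℕ ↪ ℕ) i) '' Set.univ)
        = {k | i + 1 ∣ k} := by
      ext k
      simp only [Set.mem_image, Set.mem_univ, true_and, Set.mem_setOf_eq,
        Function.Embedding.coeFn_mk, Nat.succ_eq_add_one]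
      constructor
      · rintro ⟨a, rfl⟩; exact dvd_mul_left _ _
      · rintro ⟨a, rfl⟩; exact ⟨a, mul_comm _ _⟩
    rw [hset]
  rw [Finset.prod_congr rfl h2] at key
  rw [← key]
  norm_cast
  have h4 : (filter
      (fun q : n.Partition =>
        (∀ (j : ℕ), Multiset.count j q.parts ∈ (fun _ => Set.univ : ℕ → Set ℕ) j) ∧
          ∀ j ∈ q.parts, j ∈ Finset.map ⟨Nat.succ, Nat.succ_injective⟩ (range m))
      univ) = univ := by
    apply Finset.filter_true_of_mem
    intro q _
    refine ⟨fun _ => trivial, ?_⟩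
    intro j hj
    have hj1 : 0 < j := q.parts_pos hj
    have hjn : j ≤ n := by
      simpa [q.parts_sum] using Multiset.single_le_sum (fun _ _ => Nat.zero_le _) _ hj
    simp only [mem_map, mem_range, Function.Embedding.coeFn_mk, Nat.succ_eq_add_one]
    exact ⟨j - 1, by omega, by omega⟩
  rw [h4, Finset.card_univ, p, Nat.card_eq_fintype_card]


/-- generalized stabilization -/
theorem coeff_prod_stable {R : Type*} [CommRing R] (e : ℕ → ℕ) (he : ∀ i, i < e i)
    (u m m' : ℕ) (h1 : u ≤ m) (h2 : m ≤ m') :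
    coeff (R := R) u (∏ i ∈ range m', (1 - X ^ (e i))) = coeff (R := R) u (∏ i ∈ range m, (1 - X ^ (e i))) := by
  induction m' with
  | zero => obtain rfl : m = 0 := by omega
            rfl
  | succ k ih =>
    rcases Nat.lt_or_ge m (k+1) with hk | hk
    · have hmk : m ≤ k := by omega
      rw [prod_range_succ, mul_sub, mul_one, map_sub, coeff_mul_X_pow',
        if_neg (by have := he k; omega), sub_zero]
      exact ih hmk
    · have : m = k + 1 := by omega
      subst this; rfl

def Emz (m : ℕ) : PowerSeries ℤ := ∏ i ∈ range m, (1 - X ^ (i + 1))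
def Pz : PowerSeries ℤ := PowerSeries.mk fun n => (p n : ℤ)
def Ez : PowerSeries ℤ := PowerSeries.mk fun n => coeff (R := ℤ) n (Emz n)

theorem coeff_Emz_stable (u m m' : ℕ) (h1 : u ≤ m) (h2 : m ≤ m') :
    coeff (R := ℤ) u (Emz m') = coeff (R := ℤ) u (Emz m) :=
  coeff_prod_stable (fun i => i + 1) (fun i => Nat.lt_succ_self i) u m m' h1 h2

theorem Eqc_Ez (n m : ℕ) (h : n ≤ m) : Eqc n Ez (Emz m) := by
  intro u hu
  rw [Ez, coeff_mk]
  exact (coeff_Emz_stable u u m (le_refl u) (by omega)).symm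

theorem coeff_Emz_mul_Pz (m u : ℕ) (h : u ≤ m) :
    coeff (R := ℤ) u (Emz m * Pz) = if u = 0 then 1 else 0 := by
  have hinj : Function.Injective ((↑) : ℤ → ℚ) := Int.cast_injective
  apply hinj
  have hmap : ((coeff (R := ℤ) u (Emz m * Pz) : ℤ) : ℚ)
      = coeff (R := ℚ) u (PowerSeries.map (Int.castRingHom ℚ) (Emz m * Pz)) := by
    rw [coeff_map]; rfl
  rw [hmap]
  have hEm : PowerSeries.map (Int.castRingHom ℚ) (Emz m)
      = ∏ i ∈ range m, (1 - (X : PowerSeries ℚ) ^ (i + 1)) := by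
    rw [Emz, map_prod]
    refine Finset.prod_congr rfl fun i _ => ?_
    simp [PowerSeries.map_X]
  have hP : PowerSeries.map (Int.castRingHom ℚ) Pz = PowerSeries.mk fun n => ((p n : ℚ)) := by
    ext n
    simp [Pz, coeff_map]
  rw [map_mul, hEm, hP]
  have key : Eqc m (PowerSeries.mk fun n => ((p n : ℚ)))
      (∏ i ∈ range m, (1 - (X : PowerSeries ℚ) ^ (i + 1))⁻¹) := by
    intro v hv
    rw [coeff_mk]
    exact p_eq_coeff_prod_inv v m hv
  have h2 : Eqc m ((∏ i ∈ range m, (1 - (X : PowerSeries ℚ) ^ (i + 1)))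
        * (PowerSeries.mk fun n => ((p n : ℚ))))
      ((∏ i ∈ range m, (1 - (X : PowerSeries ℚ) ^ (i + 1)))
        * (∏ i ∈ range m, (1 - (X : PowerSeries ℚ) ^ (i + 1))⁻¹)) :=
    Eqc.mul (fun _ _ => rfl) key
  rw [h2 u h]
  rw [← Finset.prod_mul_distrib]
  have h3 : ∀ i ∈ range m,
      (1 - (X : PowerSeries ℚ) ^ (i + 1)) * (1 - (X : PowerSeries ℚ) ^ (i + 1))⁻¹ = 1 := by
    intro i _
    exact PowerSeries.mul_inv_cancel _ (by simp [zero_pow])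
  rw [Finset.prod_congr rfl h3, Finset.prod_const_one, coeff_one]
  norm_num

theorem Ez_mul_Pz : Ez * Pz = 1 := by
  ext u
  have h1 : Eqc u (Ez * Pz) (Emz u * Pz) := Eqc.mul (Eqc_Ez u u le_rfl) (fun _ _ => rfl)
  rw [h1 u le_rfl, coeff_Emz_mul_Pz u u le_rfl, coeff_one]



def T (k : ℕ) : ℕ := ∑ i ∈ range k, (i + 1)

theorem T_succ (k : ℕ) : T (k + 1) = T k + (k + 1) := Finset.sum_range_succ _ _
theorem T_zero : T 0 = 0 := rfl

def B : ℕ → ℕ → PowerSeries ℤ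
  | _, 0 => 1
  | 0, _ + 1 => 0
  | n + 1, k + 1 => B n (k + 1) + X ^ (n - k) * B n k

@[simp] theorem B_zero (n : ℕ) : B n 0 = 1 := by cases n <;> rfl
@[simp] theorem B_zero_succ (k : ℕ) : B 0 (k + 1) = 0 := rfl
theorem B_succ_succ (n k : ℕ) : B (n + 1) (k + 1) = B n (k + 1) + X ^ (n - k) * B n k := rfl

theorem B_eq_zero {n k : ℕ} (h : n < k) : B n k = 0 := by
  induction n generalizing k with
  | zero => match k, h with
            | k + 1, _ => rfl
  | succ n ih =>
    match k, h with
    | k + 1, h =>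
      rw [B_succ_succ, ih (by omega), ih (by omega), mul_zero, add_zero]

abbrev PP := Polynomial (PowerSeries ℤ)
abbrev CC : PowerSeries ℤ →+* PP := Polynomial.C
abbrev ZZ : PP := Polynomial.X

def cterm (N n k : ℕ) : PP :=
  (-1) ^ k * CC ((X : PowerSeries ℤ) ^ (T k + N * (n - k)) * B n k) * ZZ ^ k

theorem cterm_top (N n : ℕ) : cterm N n (n + 1) = 0 := by
  rw [cterm, B_eq_zero (by omega : n < n + 1)]
  simp

theorem cterm_step (N n j : ℕ) (hj : j ≤ n) :
    cterm N (n+1) (j+1)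
      = cterm N n (j+1) * CC ((X : PowerSeries ℤ) ^ N)
        - cterm N n j * (CC ((X : PowerSeries ℤ) ^ (n+1)) * ZZ) := by
  rcases Nat.lt_or_ge j n with hjn | hjn
  · -- j < n : set n = j + 1 + d
    obtain ⟨d, rfl⟩ : ∃ d, n = j + 1 + d := ⟨n - j - 1, by omega⟩
    have e1 : j + 1 + d - j = d + 1 := by omega
    have e2 : j + 1 + d - (j + 1) = d := by omega
    have e3 : j + 1 + d + 1 - (j + 1) = d + 1 := by omega
    rw [cterm, cterm, cterm, B_succ_succ, e1, e2, e3, T_succ]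
    simp only [map_mul, map_pow, map_add]
    ring
  · have hjn' : j = n := by omega
    subst hjn'
    rw [cterm, cterm, cterm, B_succ_succ, B_eq_zero (by omega : j < j + 1), T_succ]
    simp only [Nat.sub_self, pow_zero, one_mul, mul_zero, zero_add, map_mul, map_pow,
      map_zero, zero_mul, zero_sub, map_add, map_one]
    ring

theorem cauchy (N n : ℕ) :
    ∏ i ∈ range n, (CC ((X : PowerSeries ℤ) ^ N) - CC ((X : PowerSeries ℤ) ^ (i + 1)) * ZZ)
      = ∑ k ∈ range (n + 1), cterm N n k := by
  induction n with
  | zero => simp [cterm, T_zero]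
  | succ n ih =>
    rw [prod_range_succ, ih, mul_sub, sum_mul, sum_mul]
    rw [Finset.sum_range_succ' (fun k => cterm N (n+1) k) (n+1)]
    rw [Finset.sum_congr rfl (fun j hj => cterm_step N n j (by rw [mem_range] at hj; omega))]
    rw [Finset.sum_sub_distrib]
    have h0 : cterm N (n+1) 0 = cterm N n 0 * CC ((X : PowerSeries ℤ) ^ N) := by
      rw [cterm, cterm]
      simp only [B_zero, pow_zero, one_mul, mul_one, Nat.sub_zero, T_zero, zero_add]
      rw [Nat.mul_succ, pow_add, map_mul]
    have e1 := Finset.sum_range_succ' (fun k => cterm N n k * CC ((X : PowerSeries ℤ) ^ N)) (n+1)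
    have e2 := Finset.sum_range_succ (fun k => cterm N n k * CC ((X : PowerSeries ℤ) ^ N)) (n+1)
    rw [cterm_top, zero_mul, add_zero] at e2
    have key : ∑ j ∈ range (n+1), cterm N n (j+1) * CC ((X : PowerSeries ℤ) ^ N)
        = ∑ k ∈ range (n+1), cterm N n k * CC ((X : PowerSeries ℤ) ^ N)
          - cterm N n 0 * CC ((X : PowerSeries ℤ) ^ N) := by
      rw [← e2, e1]
      abel
    rw [h0, key]
    abel


/-- product formula: Emz k * B n k = ∏_{i<k} (1 - X^(n-i)) -/
theorem Emz_mul_B (n k : ℕ) (h : k ≤ n) :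
    Emz k * B n k = ∏ i ∈ range k, (1 - (X : PowerSeries ℤ) ^ (n - i)) := by
  induction n generalizing k with
  | zero =>
    interval_cases k
    simp [Emz]
  | succ n ih =>
    match k with
    | 0 => simp [Emz]
    | j + 1 =>
      have hj : j ≤ n := by omega
      rw [B_succ_succ]
      have hEm : Emz (j+1) = Emz j * (1 - (X : PowerSeries ℤ) ^ (j + 1)) := by
        rw [Emz, Emz, prod_range_succ]
      rcases Nat.lt_or_ge j n with hjn | hjn
      · -- j + 1 ≤ n : use ih for both
        have h1 := ih (j+1) (by omega)
        have h2 := ih j hj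
        rw [mul_add, hEm]
        calc Emz j * (1 - (X:PowerSeries ℤ)^(j+1)) * B n (j+1)
              + Emz j * (1 - (X:PowerSeries ℤ)^(j+1)) * ((X:PowerSeries ℤ)^(n-j) * B n j)
            = (Emz (j+1) * B n (j+1))
              + (1 - (X:PowerSeries ℤ)^(j+1)) * (X:PowerSeries ℤ)^(n-j) * (Emz j * B n j) := by
              rw [hEm]; ring
          _ = ∏ i ∈ range (j+1), (1 - (X : PowerSeries ℤ) ^ (n - i))
              + (1 - (X:PowerSeries ℤ)^(j+1)) * (X:PowerSeries ℤ)^(n-j)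
                * ∏ i ∈ range j, (1 - (X : PowerSeries ℤ) ^ (n - i)) := by rw [h1, h2]
          _ = (∏ i ∈ range j, (1 - (X : PowerSeries ℤ) ^ (n - i)))
                * ((1 - (X:PowerSeries ℤ)^(n-j)) + (1 - (X:PowerSeries ℤ)^(j+1)) * (X:PowerSeries ℤ)^(n-j)) := by
              rw [prod_range_succ]; ring
          _ = (∏ i ∈ range j, (1 - (X : PowerSeries ℤ) ^ (n - i))) * (1 - (X:PowerSeries ℤ)^(n+1)) := by
              congr 1
              have hx : (X:PowerSeries ℤ)^(j+1) * (X:PowerSeries ℤ)^(n-j) = (X:PowerSeries ℤ)^(n+1) := by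
                rw [← pow_add]; congr 1; omega
              linear_combination -hx
          _ = ∏ i ∈ range (j+1), (1 - (X : PowerSeries ℤ) ^ (n + 1 - i)) := by
              rw [Finset.prod_range_succ' (fun i => (1 - (X : PowerSeries ℤ) ^ (n + 1 - i))) j]
              have : ∀ i, n + 1 - (i + 1) = n - i := fun i => by omega
              simp_rw [this]
              simp
      · -- j = n
        have hjn' : j = n := by omega
        subst hjn'
        rw [B_eq_zero (by omega : j < j + 1), zero_add, Nat.sub_self, pow_zero, one_mul, hEm]
        have h2 := ih j le_rfl
        calc Emz j * (1 - (X:PowerSeries ℤ)^(j+1)) * B j j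
            = (1 - (X:PowerSeries ℤ)^(j+1)) * (Emz j * B j j) := by ring
          _ = (1 - (X:PowerSeries ℤ)^(j+1)) * ∏ i ∈ range j, (1 - (X : PowerSeries ℤ) ^ (j - i)) := by
              rw [h2]
          _ = ∏ i ∈ range (j+1), (1 - (X : PowerSeries ℤ) ^ (j + 1 - i)) := by
              rw [Finset.prod_range_succ' (fun i => (1 - (X : PowerSeries ℤ) ^ (j + 1 - i))) j]
              have : ∀ i, j + 1 - (i + 1) = j - i := fun i => by omega
              simp_rw [this]
              simp [mul_comm]


/-- evaluation of derivative at 1 -/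
def D (f : PP) : PowerSeries ℤ := Polynomial.eval 1 (Polynomial.derivative f)

theorem D_mul (f g : PP) : D (f * g)
    = D f * Polynomial.eval 1 g + Polynomial.eval 1 f * D g := by
  rw [D, Polynomial.derivative_mul, Polynomial.eval_add, Polynomial.eval_mul,
    Polynomial.eval_mul, D, D]

/-- the finite Jacobi identity -/
theorem jac_fin (N : ℕ) (hN : 1 ≤ N) :
    (-1 : PowerSeries ℤ)^N * ((X : PowerSeries ℤ)^(T N + N*N) * (Emz N * Emz (N-1)))
      = ∑ k ∈ range (2*N+1),
          (-1 : PowerSeries ℤ)^k * ((k : PowerSeries ℤ)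
            * ((X : PowerSeries ℤ)^(T k + N*(2*N-k)) * B (2*N) k)) := by
  have hc := cauchy N (2*N)
  -- split the product
  have hsplit : ∏ i ∈ range (2*N), (CC ((X : PowerSeries ℤ) ^ N)
        - CC ((X : PowerSeries ℤ) ^ (i + 1)) * ZZ)
      = CC ((X : PowerSeries ℤ)^(T N + N*N))
        * ((∏ s ∈ range N, (CC ((X : PowerSeries ℤ)^s) - ZZ))
          * ∏ i ∈ range N, (1 - CC ((X : PowerSeries ℤ)^(i+1)) * ZZ)) := by
    have h2N : 2*N = N + N := by omega
    rw [h2N, Finset.prod_range_add]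
    have hfirst : ∏ i ∈ range N, (CC ((X : PowerSeries ℤ) ^ N)
          - CC ((X : PowerSeries ℤ) ^ (i + 1)) * ZZ)
        = CC ((X : PowerSeries ℤ)^(T N)) * ∏ s ∈ range N, (CC ((X : PowerSeries ℤ)^s) - ZZ) := by
      have hpt : ∀ i ∈ range N, (CC ((X : PowerSeries ℤ) ^ N)
            - CC ((X : PowerSeries ℤ) ^ (i + 1)) * ZZ)
          = CC ((X : PowerSeries ℤ)^(i+1)) * (CC ((X : PowerSeries ℤ)^(N-(i+1))) - ZZ) := by
        intro i hi
        rw [mem_range] at hi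
        have hexp : N = (i + 1) + (N - (i+1)) := by omega
        rw [mul_sub, ← map_mul, ← pow_add, ← hexp]
      rw [Finset.prod_congr rfl hpt, Finset.prod_mul_distrib, ← map_prod]
      congr 1
      · rw [Finset.prod_pow_eq_pow_sum]
        rfl
      · -- reindex reflect
        have hrefl := Finset.prod_range_reflect (fun s => (CC ((X : PowerSeries ℤ)^s) - ZZ)) N
        rw [← hrefl]
        refine Finset.prod_congr rfl fun i hi => ?_
        rw [mem_range] at hi
        have hexp : N - (i + 1) = N - 1 - i := by omega
        rw [hexp]
    have hsecond : ∏ i ∈ range N, (CC ((X : PowerSeries ℤ) ^ N)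
          - CC ((X : PowerSeries ℤ) ^ (N + i + 1)) * ZZ)
        = CC ((X : PowerSeries ℤ)^(N*N)) * ∏ i ∈ range N, (1 - CC ((X : PowerSeries ℤ)^(i+1)) * ZZ) := by
      have hpt : ∀ i ∈ range N, (CC ((X : PowerSeries ℤ) ^ N)
            - CC ((X : PowerSeries ℤ) ^ (N + i + 1)) * ZZ)
          = CC ((X : PowerSeries ℤ)^N) * (1 - CC ((X : PowerSeries ℤ)^(i+1)) * ZZ) := by
        intro i hi
        have hexp : N + i + 1 = N + (i + 1) := by omega
        rw [mul_sub, mul_one, ← mul_assoc, ← map_mul, ← pow_add, ← hexp]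
      rw [Finset.prod_congr rfl hpt, Finset.prod_mul_distrib, Finset.prod_const]
      rw [← map_pow, ← pow_mul, Finset.card_range]
    rw [hfirst, hsecond, pow_add, map_mul]
    ring
  rw [hsplit] at hc
  -- apply D to both sides
  have hD := congrArg D hc
  -- compute RHS of hD
  simp only [D] at hD
  rw [Polynomial.derivative_sum, Polynomial.eval_finset_sum] at hD
  have hterm : ∀ k ∈ range (2*N+1), Polynomial.eval 1 (Polynomial.derivative (cterm N (2*N) k))
      = (-1 : PowerSeries ℤ)^k * ((k : PowerSeries ℤ)
          * ((X : PowerSeries ℤ)^(T k + N*(2*N-k)) * B (2*N) k)) := by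
    intro k _
    have hform : cterm N (2*N) k
        = Polynomial.C ((-1)^k * ((X : PowerSeries ℤ) ^ (T k + N * (2*N - k)) * B (2*N) k))
          * Polynomial.X ^ k := by
      rw [cterm]
      simp only [map_mul, map_pow, map_neg, map_one]
    rw [hform, Polynomial.derivative_C_mul, Polynomial.derivative_X_pow,
      Polynomial.eval_mul, Polynomial.eval_C, Polynomial.eval_mul, Polynomial.eval_C,
      Polynomial.eval_pow, Polynomial.eval_X, one_pow, mul_one]
    push_cast
    ring
  rw [Finset.sum_congr rfl hterm] at hD
  -- compute LHS: D (C * (H * G))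
  set H := ∏ s ∈ range N, (CC ((X : PowerSeries ℤ)^s) - ZZ) with hHdef
  set G := ∏ i ∈ range N, (1 - CC ((X : PowerSeries ℤ)^(i+1)) * ZZ) with hGdef
  have hH0 : Polynomial.eval 1 H = 0 := by
    rw [hHdef, Polynomial.eval_prod]
    apply Finset.prod_eq_zero (Finset.mem_range.mpr (by omega : (0:ℕ) < N))
    simp
  have hG1 : Polynomial.eval 1 G = Emz N := by
    rw [hGdef, Polynomial.eval_prod, Emz]
    refine Finset.prod_congr rfl fun i _ => ?_
    simp
  have hDH : D H = -((-1 : PowerSeries ℤ)^(N-1) * Emz (N-1)) := by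
    rw [hHdef]
    obtain ⟨M, rfl⟩ : ∃ M, N = M + 1 := ⟨N - 1, by omega⟩
    rw [Finset.prod_range_succ' (fun s => (CC ((X : PowerSeries ℤ)^s) - ZZ)) M]
    rw [D_mul]
    have h1 : Polynomial.eval 1 ((CC ((X : PowerSeries ℤ)^0) - ZZ)) = 0 := by simp
    have h2 : D (CC ((X : PowerSeries ℤ)^0) - ZZ) = -1 := by
      rw [D, Polynomial.derivative_sub, Polynomial.derivative_C, Polynomial.derivative_X]
      simp
    rw [h1, h2, mul_zero, zero_add, mul_neg, mul_one]
    have h3 : Polynomial.eval 1 (∏ i ∈ range M, (CC ((X : PowerSeries ℤ)^(i+1)) - ZZ))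
        = (-1 : PowerSeries ℤ)^M * Emz M := by
      rw [Polynomial.eval_prod]
      have : ∀ i ∈ range M, Polynomial.eval 1 (CC ((X : PowerSeries ℤ)^(i+1)) - ZZ)
          = (-1) * (1 - (X : PowerSeries ℤ)^(i+1)) := by
        intro i _
        simp
      rw [Finset.prod_congr rfl this, Finset.prod_mul_distrib, Finset.prod_const, Emz,
        Finset.card_range]
    rw [h3]
    simp only [Nat.add_sub_cancel]
  have hLHS : D (CC ((X : PowerSeries ℤ)^(T N + N*N)) * (H * G))
      = (-1 : PowerSeries ℤ)^N * ((X : PowerSeries ℤ)^(T N + N*N) * (Emz N * Emz (N-1))) := by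
    rw [D_mul, D_mul]
    have hDC : D (CC ((X : PowerSeries ℤ)^(T N + N*N))) = 0 := by
      rw [D, Polynomial.derivative_C]
      simp
    rw [hDC, hH0, hDH, hG1, Polynomial.eval_mul, hH0, Polynomial.eval_C]
    obtain ⟨M, rfl⟩ : ∃ M, N = M + 1 := ⟨N - 1, by omega⟩
    simp only [Nat.add_sub_cancel]
    rw [pow_succ]
    ring
  calc (-1 : PowerSeries ℤ)^N * ((X : PowerSeries ℤ)^(T N + N*N) * (Emz N * Emz (N-1)))
      = D (CC ((X : PowerSeries ℤ)^(T N + N*N)) * (H * G)) := hLHS.symm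
    _ = _ := by rw [D]; exact hD


theorem T_add (a b : ℕ) : T (a + b) = T a + a * b + T b := by
  induction b with
  | zero => simp [T_zero]
  | succ b ih => rw [← Nat.add_assoc, T_succ, ih, T_succ]; ring

theorem le_T (k : ℕ) : k ≤ T k := by
  induction k with
  | zero => simp
  | succ k ih => rw [T_succ]; omega

theorem T_sq (j : ℕ) : T (j + 1) + T j = (j + 1) * (j + 1) := by
  induction j with
  | zero => rfl
  | succ j ih =>
    have h := T_succ j
    rw [T_succ (j+1)]
    zify at ih h ⊢
    linear_combination ih + h


theorem Eqc_prod_one {m t : ℕ} (g : ℕ → ℕ) (hg : ∀ i < m, t < g i) :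
    Eqc t (∏ i ∈ range m, (1 - (X : PowerSeries ℤ) ^ (g i))) 1 := by
  induction m with
  | zero => simp [Eqc]
  | succ m ih =>
    rw [prod_range_succ]
    have h1 : Eqc t (∏ i ∈ range m, (1 - (X : PowerSeries ℤ) ^ (g i))) 1 :=
      ih (fun i hi => hg i (by omega))
    have h2 : Eqc t (1 - (X : PowerSeries ℤ) ^ (g m)) 1 := by
      intro u hu
      rw [map_sub, coeff_X_pow, if_neg (by have := hg m (by omega); omega), sub_zero]
    have := h1.mul h2
    rwa [one_mul] at this

theorem constantCoeff_Emz (m : ℕ) : constantCoeff (R := ℤ) (Emz m) = 1 := by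
  rw [Emz, map_prod]
  apply Finset.prod_eq_one
  intro i _
  simp [zero_pow]

/-- B (2N) k agrees with the partition series up to degree t -/
theorem B_eqc_Pz (N k t : ℕ) (hk : k ≤ 2*N) (hk2 : t < 2*N - k + 1) (ht : t ≤ k) :
    Eqc t (B (2*N) k) Pz := by
  apply Eqc.cancel (constantCoeff_Emz k)
  have h1 : Eqc t (Emz k * B (2*N) k) 1 := by
    rw [Emz_mul_B _ _ hk]
    exact Eqc_prod_one _ (fun i hi => by omega)
  have h2 : Eqc t (Emz k * Pz) 1 := by
    intro u hu
    rw [coeff_Emz_mul_Pz k u (by omega), coeff_one]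
  intro u hu
  rw [h1 u hu, h2 u hu]

theorem e_exp (N k : ℕ) (hk : k ≤ 2*N) :
    T k + N*(2*N - k) = (T N + N*N) + (if N ≤ k then T (k - N) else T (N - k - 1)) := by
  split_ifs with h
  · -- k = N + j
    obtain ⟨j, rfl⟩ : ∃ j, k = N + j := ⟨k - N, by omega⟩
    have h1 : N + j - N = j := by omega
    have h2 : 2*N - (N+j) = N - j := by omega
    rw [h1, h2, T_add]
    have h3 : N*(N-j) + N*j = N*N := by rw [← Nat.mul_add]; congr 1; omega
    generalize T N = a
    generalize T j = b
    omega
  · -- k < N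
    obtain ⟨j, hj⟩ : ∃ j, N = k + (j + 1) := ⟨N - k - 1, by omega⟩
    have h1 : N - k - 1 = j := by omega
    rw [h1]
    rw [hj, T_add]
    have h2 : 2*(k + (j+1)) - k = (k + (j+1)) + (j+1) := by omega
    rw [h2, Nat.mul_add]
    have h3 := T_sq j
    have h4 : (k + (j + 1)) * (j + 1) = k * (j+1) + (j+1)*(j+1) := by ring
    generalize T k = a at *
    generalize T j = b at *
    generalize T (j+1) = c at *
    omega

theorem coeff_Xpow_helper {t : ℕ} (Av Dv : ℕ) {f : PowerSeries ℤ} (hf : Dv ≤ t → Eqc t f Pz) :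
    coeff (R := ℤ) (t + Av) ((X : PowerSeries ℤ)^(Av + Dv) * f)
      = if Dv ≤ t then (p (t - Dv) : ℤ) else 0 := by
  split_ifs with h
  · have hidx : t + Av = (t - Dv) + (Av + Dv) := by omega
    rw [hidx, coeff_X_pow_mul, hf h (t - Dv) (by omega), Pz, coeff_mk]
  · rw [mul_comm, coeff_mul_X_pow', if_neg (by omega)]

/-- main coefficient extraction: E² coefficients -/
theorem coeff_E2 (t : ℕ) :
    coeff (R := ℤ) t (Emz (2*t+2) * Emz (2*t+1))
      = ∑ j ∈ range (t+1),
          (if T j ≤ t then (-1)^j * (2*(j:ℤ)+1) * (p (t - T j) : ℤ) else 0) := by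
  set N := 2*t + 2 with hN
  have hid := jac_fin N (by omega)
  have happ := congrArg (coeff (R := ℤ) (t + (T N + N*N))) hid
  -- LHS
  have hC : ((-1 : PowerSeries ℤ))^N = C (R := ℤ) ((-1)^N) := by rw [map_pow, map_neg, map_one]
  rw [hC, coeff_C_mul, coeff_X_pow_mul] at happ
  -- RHS: push coeff into sum and compute each term
  rw [map_sum] at happ
  have hterm : ∀ k ∈ range (2*N+1),
      coeff (R := ℤ) (t + (T N + N*N)) ((-1 : PowerSeries ℤ)^k * ((k : PowerSeries ℤ)
          * ((X : PowerSeries ℤ)^(T k + N*(2*N-k)) * B (2*N) k)))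
        = (-1 : ℤ)^k * (k : ℤ) *
            (if (if N ≤ k then T (k - N) else T (N - k - 1)) ≤ t
              then (p (t - (if N ≤ k then T (k - N) else T (N - k - 1))) : ℤ) else 0) := by
    intro k hk
    rw [mem_range] at hk
    have hC2 : ((-1 : PowerSeries ℤ))^k * (k : PowerSeries ℤ) = C (R := ℤ) ((-1)^k * (k:ℤ)) := by
      rw [map_mul, map_pow, map_neg, map_one, map_natCast]
    rw [← mul_assoc, hC2, coeff_C_mul]
    congr 1
    rw [e_exp N k (by omega)]
    rcases le_or_gt N k with hNk | hNk
    · simp only [if_pos hNk]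
      apply coeff_Xpow_helper
      intro hDt
      apply B_eqc_Pz N k t (by omega)
      · have := le_T (k - N); omega
      · omega
    · simp only [if_neg (not_le.mpr hNk)]
      apply coeff_Xpow_helper
      intro hDt
      apply B_eqc_Pz N k t (by omega)
      · omega
      · have := le_T (N - k - 1); omega
  rw [Finset.sum_congr rfl hterm] at happ
  -- reorganize the sum: split at N, reflect the lower part, and pair up
  set Q : ℕ → ℤ := fun j => (if T j ≤ t then (p (t - T j) : ℤ) else 0) with hQ
  set σ : ℕ → ℤ := fun k => (-1 : ℤ)^k * (k : ℤ) *
      (if (if N ≤ k then T (k - N) else T (N - k - 1)) ≤ t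
        then (p (t - (if N ≤ k then T (k - N) else T (N - k - 1))) : ℤ) else 0) with hσ
  have hsum : ∑ k ∈ range (2*N+1), σ k
      = ∑ k ∈ range N, σ k + ∑ j ∈ range (N+1), σ (N + j) := by
    have h2N1 : 2*N+1 = N + (N+1) := by omega
    rw [h2N1, Finset.sum_range_add]
  have hupper : ∀ j, σ (N + j) = (-1:ℤ)^(N+j) * ((N:ℤ) + j) * Q j := by
    intro j
    rw [hσ, hQ]
    simp only [if_pos (by omega : N ≤ N + j)]
    have : N + j - N = j := by omega
    rw [this]
    push_cast
    ring
  have hlower : ∀ j < N, σ (N - 1 - j) = -((-1:ℤ)^(N+j)) * ((N:ℤ) - 1 - j) * Q j := by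
    intro j hj
    rw [hσ, hQ]
    have hle : ¬ N ≤ N - 1 - j := by omega
    simp only [if_neg hle]
    have h1 : N - (N - 1 - j) - 1 = j := by omega
    rw [h1]
    have hsign : (-1 : ℤ)^(N + j) = (-1:ℤ)^(N - 1 - j) * (-1)^(2*j+1) := by
      rw [← pow_add]
      congr 1
      omega
    have hodd : (-1 : ℤ)^(2*j+1) = -1 := by
      rw [pow_add, pow_mul]
      norm_num
    rw [hsign, hodd]
    have hcast : ((N - 1 - j : ℕ) : ℤ) = (N:ℤ) - 1 - j := by omega
    rw [hcast]
    ring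
  have hreflect : ∑ k ∈ range N, σ k = ∑ j ∈ range N, σ (N - 1 - j) :=
    (Finset.sum_range_reflect σ N).symm
  have hσ2N : σ (N + N) = 0 := by
    rw [hupper]
    have hTN : ¬ T N ≤ t := by have := le_T N; omega
    rw [hQ]
    simp only [if_neg hTN]
    ring
  have hpair : ∑ k ∈ range (2*N+1), σ k
      = ∑ j ∈ range N, (-1:ℤ)^(N+j) * (2*(j:ℤ)+1) * Q j := by
    have hss := Finset.sum_range_succ (fun j => σ (N + j)) N
    rw [hsum, hreflect, hss, hσ2N, add_zero, ← Finset.sum_add_distrib]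
    refine Finset.sum_congr rfl fun j hj => ?_
    rw [mem_range] at hj
    rw [hlower j hj, hupper j]
    ring
  rw [hpair] at happ
  -- multiply by (-1)^N
  have hmul := congrArg (fun z => (-1:ℤ)^N * z) happ
  rw [← mul_assoc, ← pow_add] at hmul
  have hNN : (-1:ℤ)^(N+N) = 1 := by
    rw [← two_mul, pow_mul]
    norm_num
  rw [hNN, one_mul, Finset.mul_sum] at hmul
  have hfin : ∀ j ∈ range N, (-1:ℤ)^N * ((-1:ℤ)^(N+j) * (2*(j:ℤ)+1) * Q j)
      = (if T j ≤ t then (-1)^j * (2*(j:ℤ)+1) * (p (t - T j) : ℤ) else 0) := by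
    intro j hj
    have : (-1:ℤ)^N * (-1:ℤ)^(N+j) = (-1:ℤ)^j := by
      rw [← pow_add]
      have : N + (N + j) = 2*N + j := by omega
      rw [this, pow_add, pow_mul]
      norm_num
    simp only [hQ]
    split_ifs with ht
    · linear_combination (2 * (j:ℤ) + 1) * (p (t - T j) : ℤ) * this
    · ring
  rw [Finset.sum_congr rfl hfin] at hmul
  -- shrink the range
  have hshrink : ∑ j ∈ range N,
        (if T j ≤ t then (-1)^j * (2*(j:ℤ)+1) * (p (t - T j) : ℤ) else 0)
      = ∑ j ∈ range (t+1),
        (if T j ≤ t then (-1)^j * (2*(j:ℤ)+1) * (p (t - T j) : ℤ) else 0) := by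
    symm
    apply Finset.sum_subset
    · intro x hx
      rw [mem_range] at *
      omega
    · intro x _ hx
      rw [mem_range] at hx
      rw [if_neg (by have := le_T x; omega)]
  rw [hshrink] at hmul
  rw [← hmul]
  have hE : N - 1 = 2*t + 1 := by omega
  rw [hE]


theorem two_T (k : ℕ) : 2 * T k = k * (k + 1) := by
  induction k with
  | zero => rfl
  | succ k ih => rw [T_succ, Nat.mul_add, ih]; ring


/-- Jacobi coefficient -/
def Jc (a : ℕ) : ℤ := ∑ j ∈ range (a+1), (if T j = a then (-1)^j * (2*(j:ℤ)+1) else 0)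
def Jz : PowerSeries ℤ := PowerSeries.mk fun a => Jc a

theorem coeff_Jz_mul_Pz (t : ℕ) :
    coeff (R := ℤ) t (Jz * Pz)
      = ∑ j ∈ range (t+1),
          (if T j ≤ t then (-1)^j * (2*(j:ℤ)+1) * (p (t - T j) : ℤ) else 0) := by
  rw [coeff_mul, Finset.Nat.sum_antidiagonal_eq_sum_range_succ_mk]
  simp only [Jz, Pz, coeff_mk, Jc]
  rw [Finset.sum_congr rfl (fun a _ => Finset.sum_mul _ _ _)]
  have hext : ∀ a ∈ range (t+1),
      ∑ j ∈ range (a+1), (if T j = a then (-1)^j * (2*(j:ℤ)+1) else 0) * (p (t-a) : ℤ)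
      = ∑ j ∈ range (t+1), (if T j = a then (-1)^j * (2*(j:ℤ)+1) * (p (t-a) : ℤ) else 0) := by
    intro a ha
    rw [mem_range] at ha
    rw [Finset.sum_subset (Finset.range_subset_range.mpr (by omega : a+1 ≤ t+1))]
    · exact Finset.sum_congr rfl fun j _ => by rw [ite_mul, zero_mul]
    · intro j hj hja
      rw [mem_range] at hj hja
      rw [if_neg, zero_mul]
      intro hTj
      have := le_T j
      omega
  rw [Finset.sum_congr rfl hext, Finset.sum_comm]
  refine Finset.sum_congr rfl fun j hj => ?_
  rw [mem_range] at hj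
  have hswap : ∀ a ∈ range (t+1), (if T j = a then (-1:ℤ)^j * (2*(j:ℤ)+1) * (p (t-a) : ℤ) else 0)
      = (if a = T j then (-1:ℤ)^j * (2*(j:ℤ)+1) * (p (t-a) : ℤ) else 0) := by
    intro a _
    congr 1
    simp [eq_comm]
  rw [Finset.sum_congr rfl hswap, Finset.sum_ite_eq' (range (t+1)) (T j)]
  by_cases h : T j ≤ t
  · rw [if_pos (mem_range.mpr (by omega)), if_pos h]
  · rw [if_neg (by rw [mem_range]; omega), if_neg h]

theorem Ez_sq : Ez * Ez = Jz * Pz := by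
  ext t
  have h1 : Eqc t (Ez * Ez) (Emz (2*t+2) * Emz (2*t+1)) :=
    Eqc.mul (Eqc_Ez t (2*t+2) (by omega)) (Eqc_Ez t (2*t+1) (by omega))
  rw [h1 t le_rfl, coeff_E2, coeff_Jz_mul_Pz]

theorem Ez_cube : Ez * (Ez * Ez) = Jz := by
  rw [Ez_sq, mul_comm Jz Pz, ← mul_assoc, mul_comm Ez Pz]
  rw [mul_comm Pz Ez, Ez_mul_Pz, one_mul]


abbrev K := ZMod 7

instance : Fact (Nat.Prime 7) := ⟨by norm_num⟩
abbrev φ : PowerSeries ℤ →+* PowerSeries K := PowerSeries.map (Int.castRingHom K)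

instance : CharP (PowerSeries K) 7 := by
  constructor
  intro x
  constructor
  · intro h
    have h0 := congrArg (constantCoeff (R := K)) h
    rw [map_natCast, map_zero] at h0
    exact (ZMod.natCast_eq_zero_iff x 7).mp h0
  · intro h
    have h1 : (C (R := K)) ((x : ℕ) : K) = ((x : ℕ) : PowerSeries K) := map_natCast (C (R := K)) x
    rw [← h1, (ZMod.natCast_eq_zero_iff x 7).mpr h, map_zero]
theorem support7_prod (m : ℕ) :
    ∀ v, ¬ (7 ∣ v) → coeff (R := K) v (∏ i ∈ range m, (1 - (X : PowerSeries K) ^ (7*(i+1)))) = 0 := by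
  induction m with
  | zero =>
    intro v hv
    rw [Finset.prod_range_zero, coeff_one, if_neg (by omega)]
  | succ m ih =>
    intro v hv
    rw [prod_range_succ, mul_sub, mul_one, map_sub, coeff_mul_X_pow']
    rw [ih v hv]
    split_ifs with h
    · rw [ih _ (by omega), zero_sub, neg_eq_zero]
    · rw [sub_zero]

theorem phi_Emz (m : ℕ) : φ (Emz m) = ∏ i ∈ range m, (1 - (X : PowerSeries K) ^ (i+1)) := by
  rw [Emz, map_prod]
  refine Finset.prod_congr rfl fun i _ => ?_
  rw [map_sub, map_one, map_pow, PowerSeries.map_X]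

theorem Eqc_phi {n : ℕ} {f g : PowerSeries ℤ} (h : Eqc n f g) : Eqc n (φ f) (φ g) := by
  intro u hu
  rw [coeff_map, coeff_map, h u hu]

/-- Frobenius: coefficients of (φ Ez)^7 vanish off multiples of 7 -/
theorem coeff_F7 (u : ℕ) (hu : ¬ (7 ∣ u)) : coeff (R := K) u ((φ Ez)^7) = 0 := by
  have h1 : Eqc u ((φ Ez)^7) ((φ (Emz u))^7) := (Eqc_phi (Eqc_Ez u u le_rfl)).pow 7
  rw [h1 u le_rfl, phi_Emz]
  have h2 : (∏ i ∈ range u, (1 - (X : PowerSeries K) ^ (i+1)))^7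
      = ∏ i ∈ range u, (1 - (X : PowerSeries K) ^ (7*(i+1))) := by
    rw [← Finset.prod_pow]
    refine Finset.prod_congr rfl fun i _ => ?_
    have hc : (1 - (X : PowerSeries K) ^ (i+1))^7 = 1^7 - ((X : PowerSeries K) ^ (i+1))^7 :=
      sub_pow_char _ _
    rw [hc, one_pow, ← pow_mul, Nat.mul_comm (i+1) 7]
  rw [h2]
  exact support7_prod u u hu

theorem constantCoeff_Ez : constantCoeff (R := ℤ) Ez = 1 := by
  have : constantCoeff (R := ℤ) Ez = coeff (R := ℤ) 0 (Emz 0) := rfl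
  rw [this, Emz, Finset.prod_range_zero, coeff_zero_eq_constantCoeff, map_one]

/-- coefficients of (φ Pz)^7 vanish off multiples of 7 -/
theorem coeff_P7 (u : ℕ) (hu : ¬ (7 ∣ u)) : coeff (R := K) u ((φ Pz)^7) = 0 := by
  have hFP : (φ Ez)^7 * (φ Pz)^7 = 1 := by
    rw [← mul_pow, ← map_mul, Ez_mul_Pz, map_one, one_pow]
  induction u using Nat.strong_induction_on with
  | _ u ih =>
    have h0 := congrArg (coeff (R := K) u) hFP
    rw [coeff_mul, Finset.Nat.sum_antidiagonal_eq_sum_range_succ_mk,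
      Finset.sum_range_succ', coeff_one, if_neg (by omega)] at h0
    have hc0 : coeff (R := K) 0 ((φ Ez)^7) = 1 := by
      rw [coeff_zero_eq_constantCoeff, map_pow, ← coeff_zero_eq_constantCoeff, coeff_map,
        coeff_zero_eq_constantCoeff, constantCoeff_Ez]
      norm_num
    simp only [Nat.sub_zero] at h0
    rw [hc0, one_mul] at h0
    have hterms : ∑ i ∈ range u, coeff (R := K) (i+1) ((φ Ez)^7) * coeff (R := K) (u - (i+1)) ((φ Pz)^7) = 0 := by
      refine Finset.sum_eq_zero fun i hi => ?_
      rw [mem_range] at hi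
      by_cases hdvd : 7 ∣ (i + 1)
      · rw [ih (u - (i+1)) (by omega) (by omega), mul_zero]
      · rw [coeff_F7 _ hdvd, zero_mul]
    rw [hterms, zero_add] at h0
    exact h0

theorem square_key : ∀ x y : K, x*x + y*y = 0 → x * y = 0 := by decide

theorem sq_odd (j : ℕ) : (2*j+1)*(2*j+1) = 8 * T j + 1 := by
  have h := two_T j
  calc (2*j+1)*(2*j+1) = 4*(j*(j+1)) + 1 := by ring
    _ = 4*(2*T j) + 1 := by rw [h]
    _ = 8*T j + 1 := by ring

theorem coeff_Jsq (a : ℕ) (ha : a % 7 = 5) : coeff (R := K) a (φ Jz * φ Jz) = 0 := by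
  rw [coeff_mul]
  apply Finset.sum_eq_zero
  rintro ⟨c, d⟩ hcd
  rw [Finset.HasAntidiagonal.mem_antidiagonal] at hcd
  have hco : ∀ e, coeff (R := K) e (φ Jz)
      = ∑ j ∈ range (e+1), (if T j = e then ((-1:K))^j * (2*(j:K)+1) else 0) := by
    intro e
    rw [coeff_map, Jz, coeff_mk, Jc]
    rw [eq_intCast (Int.castRingHom K)]
    push_cast
    rfl
  rw [hco c, hco d, Finset.sum_mul_sum]
  apply Finset.sum_eq_zero
  intro j _
  apply Finset.sum_eq_zero
  intro k _
  split_ifs with h1 h2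
  · -- T j = c, T k = d
    have hTj : ((8 * T j + 1 : ℕ) : K) = (2*(j:K)+1)*(2*(j:K)+1) := by
      rw [← sq_odd]; push_cast; ring
    have hTk : ((8 * T k + 1 : ℕ) : K) = (2*(k:K)+1)*(2*(k:K)+1) := by
      rw [← sq_odd]; push_cast; ring
    have hsum : (2*(j:K)+1)*(2*(j:K)+1) + (2*(k:K)+1)*(2*(k:K)+1) = 0 := by
      rw [← hTj, ← hTk, ← Nat.cast_add]
      have harith : 8 * T j + 1 + (8 * T k + 1) = 8*a + 2 := by omega
      rw [harith]
      exact (ZMod.natCast_eq_zero_iff _ 7).mpr (by omega)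
    have hxy := square_key _ _ hsum
    linear_combination ((-1:K)^j * (-1:K)^k) * hxy
  · rw [mul_zero]
  · rw [zero_mul]
  · rw [zero_mul]

theorem main (n : ℕ) : 7 ∣ p (7*n+5) := by
  have hJ : φ Ez * (φ Ez * φ Ez) = φ Jz := by rw [← map_mul, ← map_mul, Ez_cube]
  have hFP : φ Ez * φ Pz = 1 := by rw [← map_mul, Ez_mul_Pz, map_one]
  have hP : φ Pz = (φ Jz * φ Jz) * (φ Pz)^7 := by
    calc φ Pz = (φ Ez * φ Pz)^6 * φ Pz := by rw [hFP]; ring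
      _ = (φ Ez * (φ Ez * φ Ez)) * (φ Ez * (φ Ez * φ Ez)) * (φ Pz)^7 := by ring
      _ = (φ Jz * φ Jz) * (φ Pz)^7 := by rw [hJ]
  have h0 : coeff (R := K) (7*n+5) (φ Pz) = 0 := by
    rw [hP, coeff_mul]
    apply Finset.sum_eq_zero
    rintro ⟨a, b⟩ hab
    rw [Finset.HasAntidiagonal.mem_antidiagonal] at hab
    by_cases hb : 7 ∣ b
    · rw [coeff_Jsq a (by omega), zero_mul]
    · rw [coeff_P7 b hb, mul_zero]
  rw [coeff_map, Pz, coeff_mk] at h0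
  have h1 : ((p (7*n+5) : ℕ) : K) = 0 := by exact_mod_cast h0
  exact (ZMod.natCast_eq_zero_iff _ 7).mp h1

end
end Rama

theorem stmt0 : ∀ n : ℕ, 7 ∣ p (7 * n + 5) := fun n => Rama.main n
end

section
/- For all nonnegative integers n, b_49(7(n+1) − 2) ≡ 0 (mod 7), i.e., b_49(7n + 5) ≡ 0 (mod 7), where b_49(n) counts partitions with no part divisible by 49. -/
open PowerSeries

namespace Aux13

noncomputable section

open Finset
open scoped Classical

variable {α : Type*}

/-- A convenience constructor for the power series whose coefficients indicate a subset. -/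
def indicatorSeries (α : Type*) [Semiring α] (s : Set ℕ) : PowerSeries α :=
  PowerSeries.mk fun n => if n ∈ s then 1 else 0

theorem coeff_indicator (s : Set ℕ) [Semiring α] (n : ℕ) :
    coeff (R := α) n (indicatorSeries _ s) = if n ∈ s then 1 else 0 :=
  coeff_mk _ _

theorem constantCoeff_indicator (s : Set ℕ) [Semiring α] :
    constantCoeff (R := α) (indicatorSeries _ s) = if 0 ∈ s then 1 else 0 :=
  rfl

theorem num_series' [Field α] (i : ℕ) :
    (1 - (X : PowerSeries α) ^ (i + 1))⁻¹ = indicatorSeries α {k | i + 1 ∣ k} := by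
  rw [PowerSeries.inv_eq_iff_mul_eq_one]
  · ext n
    cases n with
    | zero => simp [mul_sub, zero_pow, constantCoeff_indicator]
    | succ n =>
      simp only [coeff_one, if_false, mul_sub, mul_one, coeff_indicator,
        LinearMap.map_sub, reduceCtorEq]
      simp_rw [coeff_mul, coeff_X_pow, coeff_indicator, @boole_mul _ _ _ _]
      erw [@sum_ite _ _ _ _ _ (Classical.decPred _), sum_ite]
      simp_rw [@filter_filter _ _ _ _ _, sum_const_zero, add_zero, sum_const, nsmul_eq_mul, mul_one,
        sub_eq_iff_eq_add, zero_add]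
      symm
      split_ifs with h
      · suffices #{a ∈ antidiagonal (n + 1) | i + 1 ∣ a.fst ∧ a.snd = i + 1} = 1 by
          simp only [Set.mem_setOf_eq]; convert congr_arg ((↑) : ℕ → α) this; norm_cast
        rw [card_eq_one]
        cases' h with p hp
        refine ⟨((i + 1) * (p - 1), i + 1), ?_⟩
        ext ⟨a₁, a₂⟩
        simp only [mem_filter, Prod.mk.injEq, HasAntidiagonal.mem_antidiagonal, mem_singleton]
        constructor
        · rintro ⟨a_left, ⟨a, rfl⟩, rfl⟩
          refine ⟨?_, rfl⟩
          rw [Nat.mul_sub_left_distrib, ← hp, ← a_left, mul_one, Nat.add_sub_cancel]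
        · rintro ⟨rfl, rfl⟩
          match p with
          | 0 => rw [mul_zero] at hp; cases hp
          | p + 1 => rw [hp]; simp [mul_add]
      · suffices #{a ∈ antidiagonal (n + 1) | i + 1 ∣ a.fst ∧ a.snd = i + 1} = 0 by
          simp only [Set.mem_setOf_eq]; convert congr_arg ((↑) : ℕ → α) this; norm_cast
        rw [card_eq_zero]
        apply eq_empty_of_forall_notMem
        simp only [Prod.forall, mem_filter, not_and, HasAntidiagonal.mem_antidiagonal]
        rintro _ h₁ h₂ ⟨a, rfl⟩ rfl
        apply h
        simp [← h₂]
  · simp [zero_pow]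

theorem partialGF_prop (α : Type*) [CommSemiring α] (n : ℕ) (s : Finset ℕ) (hs : ∀ i ∈ s, 0 < i)
    (c : ℕ → Set ℕ) (hc : ∀ i, i ∉ s → 0 ∈ c i) :
    #{p : n.Partition | (∀ j, p.parts.count j ∈ c j) ∧ ∀ j ∈ p.parts, j ∈ s} =
      coeff (R := α) n (∏ i ∈ s, indicatorSeries α ((· * i) '' c i)) := by
  simp_rw [coeff_prod, coeff_indicator, prod_boole, sum_boole]
  apply congr_arg
  simp only [mem_univ, forall_true_left, not_and, not_forall, exists_prop,
    Set.mem_image, not_exists]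
  set φ : (a : Nat.Partition n) →
    a ∈ filter (fun p ↦ (∀ (j : ℕ), Multiset.count j p.parts ∈ c j) ∧ ∀ j ∈ p.parts, j ∈ s) univ →
    ℕ →₀ ℕ := fun p _ => {
      toFun := fun i => Multiset.count i p.parts • i
      support := Finset.filter (fun i => i ≠ 0) p.parts.toFinset
      mem_support_toFun := fun a => by
        simp only [smul_eq_mul, ne_eq, mul_eq_zero, Multiset.count_eq_zero]
        rw [not_or, not_not]
        simp only [Multiset.mem_toFinset, not_not, mem_filter] }
  refine Finset.card_bij φ ?_ ?_ ?_
  · intro a ha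
    simp only [φ, not_forall, not_exists, not_and, exists_prop, mem_filter]
    rw [mem_finsuppAntidiag]
    dsimp only [ne_eq, smul_eq_mul, id_eq, eq_mpr_eq_cast, le_eq_subset, Finsupp.coe_mk]
    simp only [mem_univ, forall_true_left, not_and, not_forall, exists_prop,
      mem_filter, true_and] at ha
    refine ⟨⟨?_, fun i ↦ ?_⟩, fun i _ ↦ ⟨a.parts.count i, ha.1 i, rfl⟩⟩
    · conv_rhs => simp [← a.parts_sum]
      rw [sum_multiset_count_of_subset _ s]
      · simp only [smul_eq_mul]
      · intro i
        simp only [Multiset.mem_toFinset, not_not, mem_filter]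
        apply ha.2
    · simp only [ne_eq, Multiset.mem_toFinset, not_not, mem_filter, and_imp]
      exact fun hi _ ↦ ha.2 i hi
  · intro p₁ hp₁ p₂ hp₂ h
    apply Nat.Partition.ext
    simp only [true_and, mem_univ, mem_filter] at hp₁ hp₂
    ext i
    simp only [φ, ne_eq, Multiset.mem_toFinset, not_not, smul_eq_mul, Finsupp.mk.injEq] at h
    by_cases hi : i = 0
    · rw [hi]
      rw [Multiset.count_eq_zero_of_notMem]
      · rw [Multiset.count_eq_zero_of_notMem]
        intro a; exact Nat.lt_irrefl 0 (hs 0 (hp₂.2 0 a))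
      intro a; exact Nat.lt_irrefl 0 (hs 0 (hp₁.2 0 a))
    · rw [← mul_left_inj' hi]
      rw [funext_iff] at h
      exact h.2 i
  · simp only [φ, mem_filter, mem_finsuppAntidiag, mem_univ, exists_prop, true_and, and_assoc]
    rintro f ⟨hf, hf₃, hf₄⟩
    have hf' : f ∈ finsuppAntidiag s n := mem_finsuppAntidiag.mpr ⟨hf, hf₃⟩
    simp only [mem_finsuppAntidiag] at hf'
    refine ⟨⟨∑ i ∈ s, Multiset.replicate (f i / i) i, ?_, ?_⟩, ?_, ?_, ?_⟩
    · intro i hi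
      simp only [exists_prop, Multiset.mem_sum, mem_map, Function.Embedding.coeFn_mk] at hi
      rcases hi with ⟨t, ht, z⟩
      apply hs
      rwa [Multiset.eq_of_mem_replicate z]
    · simp_rw [Multiset.sum_sum, Multiset.sum_replicate, Nat.nsmul_eq_mul]
      rw [← hf'.1]
      refine sum_congr rfl fun i hi => Nat.div_mul_cancel ?_
      rcases hf₄ i hi with ⟨w, _, hw₂⟩
      rw [← hw₂]
      exact dvd_mul_left _ _
    · intro i
      simp_rw [Multiset.count_sum', Multiset.count_replicate, sum_ite_eq']
      split_ifs with h
      · rcases hf₄ i h with ⟨w, hw₁, hw₂⟩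
        rwa [← hw₂, Nat.mul_div_cancel _ (hs i h)]
      · exact hc _ h
    · intro i hi
      rw [Multiset.mem_sum] at hi
      rcases hi with ⟨j, hj₁, hj₂⟩
      rwa [Multiset.eq_of_mem_replicate hj₂]
    · ext i
      simp_rw [Multiset.count_sum', Multiset.count_replicate, sum_ite_eq']
      simp only [ne_eq, Multiset.mem_toFinset, not_not, smul_eq_mul, ite_mul,
        zero_mul, Finsupp.coe_mk]
      split_ifs with h
      · apply Nat.div_mul_cancel
        rcases hf₄ i h with ⟨w, _, hw₂⟩
        apply Dvd.intro_left _ hw₂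
      · apply symm
        rw [← Finsupp.notMem_support_iff]
        exact notMem_mono hf'.2 h

/-! ### The ring `R = ZMod 7` and basic series -/

abbrev R : Type := ZMod 7

instance : Fact (Nat.Prime 7) := ⟨by norm_num⟩

abbrev S : Type := PowerSeries R

instance : NoZeroDivisors S := inferInstanceAs (NoZeroDivisors (PowerSeries (ZMod 7)))

instance : CharP S 7 := ⟨fun x => by
  rw [← map_natCast (PowerSeries.C (R := R)) x, ← CharP.cast_eq_zero_iff R 7 x]
  constructor
  · intro h
    have := congrArg (PowerSeries.constantCoeff (R := R)) h
    simpa using this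
  · intro h
    rw [h, map_zero]⟩

/-- partial product `∏_{j=1}^{L} (1 - X^j)`. -/
def Pq (L : ℕ) : S := ∏ j ∈ Finset.Icc 1 L, (1 - X ^ j)

/-- Gaussian binomial coefficients (as power series in `X` over `R`). -/
def gb : ℕ → ℕ → S
  | 0, 0 => 1
  | 0, _+1 => 0
  | _+1, 0 => 1
  | L+1, m+1 => gb L (m+1) + X ^ (L - m) * gb L m

lemma gb_zero : ∀ {L m : ℕ}, L < m → gb L m = 0 := by
  intro L
  induction L with
  | zero => rintro (_|m) h; · omega
            · rfl
  | succ L ih =>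
    rintro (_|m) h
    · omega
    · show gb L (m+1) + X ^ (L - m) * gb L m = 0
      rw [ih (by omega), ih (by omega), mul_zero, add_zero]

lemma gb_self : ∀ L : ℕ, gb L L = 1 := by
  intro L
  induction L with
  | zero => rfl
  | succ L ih =>
    show gb L (L+1) + X ^ (L - L) * gb L L = 1
    rw [ih, gb_zero (by omega), mul_one, zero_add, Nat.sub_self, pow_zero]

/-- the `q`-binomial theorem. -/
lemma gb_succ_succ (L m : ℕ) :
    gb (L+1) (m+1) = gb L (m+1) + X ^ (L - m) * gb L m := rfl

lemma gb_zero_right : ∀ L, gb L 0 = 1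
  | 0 => rfl
  | _+1 => rfl

lemma qbt (L : ℕ) :
    (∏ i ∈ Finset.range L, (1 + Polynomial.C ((X : S) ^ i) * Polynomial.X)) =
      ∑ m ∈ Finset.range (L + 1),
        Polynomial.C (gb L m * X ^ m.choose 2) * Polynomial.X ^ m := by
  induction L with
  | zero => simp [gb]
  | succ L ih =>
    rw [Finset.prod_range_succ, ih, mul_add, mul_one, Finset.sum_mul]
    have h2 : ∀ m ∈ Finset.range (L+1),
        (Polynomial.C (gb L m * X ^ m.choose 2) * Polynomial.X ^ m) *
          (Polynomial.C ((X:S)^L) * Polynomial.X)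
        = Polynomial.C ((X:S)^(L-m) * gb L m * X ^ (m+1).choose 2) * Polynomial.X ^ (m+1) := by
      intro m hm
      rw [Finset.mem_range] at hm
      have hc : (m+1).choose 2 = m.choose 2 + m := by
        rw [Nat.choose_succ_succ, Nat.choose_one_right]
        exact (by omega : m + m.choose 2 = m.choose 2 + m)
      have hscal : gb L m * X ^ m.choose 2 * (X:S)^L
          = (X:S)^(L-m) * gb L m * X ^ (m+1).choose 2 := by
        have hx : (X:S)^L = (X:S)^(L-m) * X^m := by
          rw [← pow_add]; congr 1; omega
        rw [hx, hc, pow_add]; ring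
      rw [mul_mul_mul_comm, ← Polynomial.C_mul, ← pow_succ, hscal]
    rw [Finset.sum_congr rfl h2]
    have hsplit : ∀ m : ℕ,
        Polynomial.C (gb (L+1) (m+1) * X ^ (m+1).choose 2) * Polynomial.X ^ (m+1)
        = Polynomial.C (gb L (m+1) * X ^ (m+1).choose 2) * Polynomial.X ^ (m+1)
          + Polynomial.C ((X:S)^(L-m) * gb L m * X ^ (m+1).choose 2) * Polynomial.X ^ (m+1) := by
      intro m
      rw [gb_succ_succ, add_mul, Polynomial.C_add, add_mul, mul_assoc]
    rw [Finset.sum_range_succ'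
      (fun m => Polynomial.C (gb (L+1) m * X ^ m.choose 2) * Polynomial.X ^ m) (L+1)]
    simp only [hsplit]
    rw [Finset.sum_add_distrib]
    have hfirst :
        (∑ m ∈ Finset.range (L + 1), Polynomial.C (gb L m * X ^ m.choose 2) * Polynomial.X ^ m)
        = (∑ m ∈ Finset.range (L + 1),
            Polynomial.C (gb L (m+1) * X ^ (m+1).choose 2) * Polynomial.X ^ (m+1))
          + Polynomial.C (gb (L+1) 0 * X ^ Nat.choose 0 2) * Polynomial.X ^ 0 := by
      rw [Finset.sum_range_succ
        (fun m => Polynomial.C (gb L (m+1) * X ^ (m+1).choose 2) * Polynomial.X ^ (m+1)) L]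
      rw [gb_zero (by omega : L < L + 1)]
      rw [Finset.sum_range_succ'
        (fun m => Polynomial.C (gb L m * X ^ m.choose 2) * Polynomial.X ^ m) L]
      simp [gb_zero_right]
    rw [hfirst]
    ring

/-- `gb L m * (q)_m * (q)_{L-m} = (q)_L`. -/
lemma Pq_succ (k : ℕ) : Pq (k+1) = Pq k * (1 - X^(k+1)) := by
  rw [Pq, Pq, Finset.prod_Icc_succ_top (by omega : 1 ≤ k + 1)]

lemma Pq_zero : Pq 0 = 1 := by simp [Pq]

lemma gb_mul_Pq : ∀ L m : ℕ, m ≤ L → gb L m * Pq m * Pq (L - m) = Pq L := by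
  intro L
  induction L with
  | zero =>
    intro m hm
    interval_cases m
    simp [gb, Pq]
  | succ L ih =>
    rintro (_|m') hm
    · rw [gb_zero_right, Pq_zero, Nat.sub_zero, one_mul, one_mul]
    · rcases Nat.lt_or_ge m' L with hcase | hcase
      · -- m' + 1 ≤ L
        have e1 : L + 1 - (m'+1) = (L - (m'+1)) + 1 := by omega
        have e2 : L - (m'+1) + 1 = L - m' := by omega
        have hPa : Pq (L + 1 - (m'+1)) = Pq (L - (m'+1)) * (1 - X^(L-m')) := by
          rw [e1, Pq_succ, e2]
        have hE2 : Pq (L - m') = Pq (L - (m'+1)) * (1 - X^(L - m')) := by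
          rw [← e2, Pq_succ]
        have h1 := ih (m'+1) hcase
        have h2 := ih m' (by omega)
        have hX : (X : S)^(L-m') * X^(m'+1) = X^(L+1) := by
          rw [← pow_add]; congr 1; omega
        have h2' : gb L m' * Pq (m'+1) * (Pq (L-(m'+1)) * (1 - X^(L-m')))
            = (1 - X^(m'+1)) * Pq L := by
          rw [Pq_succ m', ← hE2]
          linear_combination (1 - X^(m'+1 : ℕ) : S) * h2
        rw [gb_succ_succ, hPa, Pq_succ L]
        linear_combination (1 - X^(L-m' : ℕ) : S) * h1 + X^(L-m' : ℕ) * h2'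
          - Pq L * hX
      · -- m' = L
        have hm' : m' = L := by omega
        subst hm'
        rw [gb_self, one_mul, Nat.sub_self, Pq_zero, mul_one]

lemma coeff_comp_C_mul_X (P : Polynomial S) (c : S) (m : ℕ) :
    (P.comp (Polynomial.C c * Polynomial.X)).coeff m = P.coeff m * c ^ m := by
  induction P using Polynomial.induction_on' with
  | add p q hp hq => simp [Polynomial.add_comp, hp, hq, add_mul]
  | monomial n a =>
    rw [Polynomial.monomial_comp]
    rw [mul_pow, ← Polynomial.C_pow, ← mul_assoc, ← Polynomial.C_mul]
    rw [Polynomial.coeff_monomial]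
    rw [Polynomial.C_mul_X_pow_eq_monomial, Polynomial.coeff_monomial]
    split_ifs with hh
    · subst hh; ring
    · simp

/-- Triangular-number exponents, `t M m = T_{m-M}`. -/
def t (M m : ℕ) : ℕ := if M ≤ m then (m - M + 1).choose 2 else (M - m).choose 2

lemma choose_two_mul (n : ℕ) : n.choose 2 * 2 = n * (n - 1) := by
  rw [Nat.choose_two_right, Nat.div_mul_cancel]
  rcases Nat.even_or_odd n with h | h
  · exact Dvd.dvd.mul_right h.two_dvd _
  · have he : Even (n - 1) := by
      rcases h with ⟨k, hk⟩; exact ⟨k, by omega⟩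
    exact Dvd.dvd.mul_left he.two_dvd _

lemma choose_two_mul' (n : ℕ) : (n + 1).choose 2 * 2 = (n + 1) * n := by
  rw [choose_two_mul, Nat.add_sub_cancel]

lemma t_exp (M m : ℕ) (hM : 1 ≤ M) : t M m + (M - 1) * m = m.choose 2 + M.choose 2 := by
  obtain ⟨M', rfl⟩ : ∃ M', M = M' + 1 := ⟨M - 1, by omega⟩
  simp only [Nat.add_sub_cancel]
  rcases le_or_gt (M' + 1) m with h | h
  · obtain ⟨d, rfl⟩ := Nat.exists_eq_add_of_le h
    rw [t, if_pos (by omega), show M' + 1 + d - (M' + 1) + 1 = d + 1 from by omega]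
    have e1' := choose_two_mul' d
    have e2' : (M' + 1 + d).choose 2 * 2 = (M' + d + 1) * (M' + d) := by
      rw [show M' + 1 + d = M' + d + 1 from by omega]; exact choose_two_mul' (M' + d)
    have e3' := choose_two_mul' M'
    have key : (d + 1) * d + 2 * (M' * (M' + 1 + d)) = (M' + d + 1) * (M' + d) + (M' + 1) * M' := by
      ring
    omega
  · rw [t, if_neg (by omega)]
    obtain ⟨d, hd⟩ : ∃ d, M' + 1 - m = d + 1 := ⟨M' - m, by omega⟩
    rw [hd]
    have hM'd : M' = m + d := by omega
    subst hM'd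
    have e1' := choose_two_mul' d
    have e3' : (m + d + 1).choose 2 * 2 = (m + d + 1) * (m + d) := choose_two_mul' (m + d)
    rcases Nat.eq_zero_or_pos m with rfl | hm
    · simp only [Nat.zero_add, zero_add]
      have e4' : (0 : ℕ).choose 2 = 0 := rfl
      omega
    · obtain ⟨m', rfl⟩ : ∃ m', m = m' + 1 := ⟨m - 1, by omega⟩
      have e2'' := choose_two_mul' m'
      have e3'' : (m' + 1 + d + 1).choose 2 * 2 = (m' + 1 + d + 1) * (m' + 1 + d) := by
        exact choose_two_mul' (m' + 1 + d)
      have key : (d + 1) * d + 2 * ((m' + 1 + d) * (m' + 1)) =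
          (m' + 1) * m' + (m' + 1 + d + 1) * (m' + 1 + d) := by ring
      omega

/-- Finite Jacobi triple product. -/
lemma jtp (M : ℕ) (hM : 1 ≤ M) :
    (∏ j ∈ Finset.Icc 1 M, (1 + Polynomial.C ((X : S) ^ j) * Polynomial.X)) *
        (∏ j ∈ Finset.Icc 1 M, (Polynomial.X + Polynomial.C ((X : S) ^ (j - 1)))) =
      ∑ m ∈ Finset.range (2 * M + 1),
        Polynomial.C (gb (2 * M) m * X ^ t M m) * Polynomial.X ^ m := by
  classical
  set c : S := (X : S) ^ (M - 1) with hc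
  set q : Polynomial S := Polynomial.C c * Polynomial.X with hq
  -- the common normal form
  set Sig : Polynomial S := ∑ m ∈ Finset.range (2 * M + 1),
      Polynomial.C (gb (2 * M) m * X ^ (m.choose 2 + M.choose 2)) * Polynomial.X ^ m with hSig
  have hIcc : Finset.Icc 1 M = Finset.Ico 1 (M + 1) := by
    ext x; simp [Finset.mem_Icc, Finset.mem_Ico]
  have hsum1 : ∑ j ∈ Finset.Icc 1 M, (j - 1) = M.choose 2 := by
    rw [hIcc, Finset.sum_Ico_eq_sum_range]
    simp only [Nat.add_sub_cancel_left, Nat.add_sub_cancel]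
    have h1 := Finset.sum_range_id_mul_two M
    have h2 := choose_two_mul M
    omega
  -- left side after substitution
  have hleft :
      ((∏ j ∈ Finset.Icc 1 M, (1 + Polynomial.C ((X : S) ^ j) * Polynomial.X)) *
        (∏ j ∈ Finset.Icc 1 M, (Polynomial.X + Polynomial.C ((X : S) ^ (j - 1))))).comp q
      = Sig := by
    rw [Polynomial.mul_comp, Polynomial.prod_comp, Polynomial.prod_comp]
    have hf1 : ∀ j ∈ Finset.Icc 1 M,
        ((1 : Polynomial S) + Polynomial.C ((X : S) ^ j) * Polynomial.X).comp q
        = 1 + Polynomial.C ((X : S) ^ (j + (M - 1))) * Polynomial.X := by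
      intro j hj
      rw [Polynomial.add_comp, Polynomial.one_comp, Polynomial.mul_comp, Polynomial.C_comp,
        Polynomial.X_comp, hq, pow_add, Polynomial.C_mul]
      ring
    have hf2 : ∀ j ∈ Finset.Icc 1 M,
        (Polynomial.X + Polynomial.C ((X : S) ^ (j - 1))).comp q
        = Polynomial.C ((X : S) ^ (j - 1)) * (1 + Polynomial.C ((X : S) ^ (M - j)) * Polynomial.X) := by
      intro j hj
      rw [Finset.mem_Icc] at hj
      have hxx : (X : S) ^ (j - 1) * (X : S) ^ (M - j) = c := by
        rw [← pow_add, hc]; congr 1; omega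
      rw [Polynomial.add_comp, Polynomial.X_comp, Polynomial.C_comp, hq, mul_add, mul_one,
        ← mul_assoc, ← Polynomial.C_mul, hxx]
      ring
    rw [Finset.prod_congr rfl hf1, Finset.prod_congr rfl hf2, Finset.prod_mul_distrib,
      ← map_prod, Finset.prod_pow_eq_pow_sum, hsum1]
    have hA : (∏ j ∈ Finset.Icc 1 M, (1 + Polynomial.C ((X : S) ^ (j + (M - 1))) * Polynomial.X))
        = ∏ i ∈ Finset.range M, (1 + Polynomial.C ((X : S) ^ (M + i)) * Polynomial.X) := by
      rw [hIcc, Finset.prod_Ico_eq_prod_range]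
      simp only [Nat.add_sub_cancel]
      apply Finset.prod_congr rfl
      intro i hi
      rw [show 1 + i + (M - 1) = M + i from by omega]
    have hB : (∏ j ∈ Finset.Icc 1 M, (1 + Polynomial.C ((X : S) ^ (M - j)) * Polynomial.X))
        = ∏ i ∈ Finset.range M, (1 + Polynomial.C ((X : S) ^ i) * Polynomial.X) := by
      rw [hIcc, Finset.prod_Ico_eq_prod_range]
      simp only [Nat.add_sub_cancel]
      have hre := Finset.prod_range_reflect
        (fun i => (1 + Polynomial.C ((X : S) ^ i) * Polynomial.X)) M
      rw [← hre]
      apply Finset.prod_congr rfl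
      intro i hi
      rw [Finset.mem_range] at hi
      rw [show M - (1 + i) = M - 1 - i from by omega]
    rw [hA, hB]
    have h2M : (∏ i ∈ Finset.range M, (1 + Polynomial.C ((X : S) ^ (M + i)) * Polynomial.X)) *
        (Polynomial.C ((X : S) ^ M.choose 2) *
          ∏ i ∈ Finset.range M, (1 + Polynomial.C ((X : S) ^ i) * Polynomial.X))
        = Polynomial.C ((X : S) ^ M.choose 2) *
          ∏ i ∈ Finset.range (2 * M), (1 + Polynomial.C ((X : S) ^ i) * Polynomial.X) := by
      rw [two_mul, Finset.prod_range_add]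
      ring
    rw [h2M, qbt (2 * M), Finset.mul_sum, hSig]
    apply Finset.sum_congr rfl
    intro m hm
    rw [← mul_assoc, ← Polynomial.C_mul]
    congr 2
    rw [pow_add]
    ring
  -- right side after substitution
  have hright :
      (∑ m ∈ Finset.range (2 * M + 1),
        Polynomial.C (gb (2 * M) m * X ^ t M m) * Polynomial.X ^ m).comp q = Sig := by
    rw [Polynomial.sum_comp, hSig]
    apply Finset.sum_congr rfl
    intro m hm
    have hsc : gb (2 * M) m * X ^ t M m * c ^ m
        = gb (2 * M) m * X ^ (m.choose 2 + M.choose 2) := by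
      rw [hc, ← pow_mul, mul_assoc, ← pow_add]
      congr 2
      have := t_exp M m hM
      omega
    rw [Polynomial.mul_comp, Polynomial.C_comp, Polynomial.pow_comp, Polynomial.X_comp, hq,
      mul_pow, ← Polynomial.C_pow, ← mul_assoc, ← Polynomial.C_mul, hsc]
  -- cancel the substitution
  have hcomp := hleft.trans hright.symm
  apply Polynomial.ext
  intro n
  have h1 := coeff_comp_C_mul_X
    ((∏ j ∈ Finset.Icc 1 M, (1 + Polynomial.C ((X : S) ^ j) * Polynomial.X)) *
      (∏ j ∈ Finset.Icc 1 M, (Polynomial.X + Polynomial.C ((X : S) ^ (j - 1))))) c n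
  have h2 := coeff_comp_C_mul_X
    (∑ m ∈ Finset.range (2 * M + 1),
      Polynomial.C (gb (2 * M) m * X ^ t M m) * Polynomial.X ^ m) c n
  rw [← hq] at h1 h2
  rw [hcomp, h2] at h1
  have hcn : c ^ n ≠ 0 := by
    rw [hc, ← pow_mul]
    exact pow_ne_zero _ PowerSeries.X_ne_zero
  exact (mul_right_cancel₀ hcn h1.symm)

lemma derivative_finset_prod (s : Finset ℕ) (f : ℕ → Polynomial S) :
    Polynomial.derivative (∏ i ∈ s, f i)
      = ∑ i ∈ s, (∏ j ∈ s.erase i, f j) * Polynomial.derivative (f i) := by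
  classical
  induction s using Finset.induction_on with
  | empty => simp
  | @insert a s ha ih =>
    rw [Finset.prod_insert ha, Polynomial.derivative_mul, ih, Finset.sum_insert ha,
      Finset.erase_insert ha, Finset.mul_sum]
    have h2 : ∀ i ∈ s, (∏ j ∈ (insert a s).erase i, f j) * Polynomial.derivative (f i)
        = f a * ((∏ j ∈ s.erase i, f j) * Polynomial.derivative (f i)) := by
      intro i hi
      have hne : i ≠ a := fun h => ha (h ▸ hi)
      rw [Finset.erase_insert_of_ne (Ne.symm hne),
        Finset.prod_insert (fun hmem => ha (Finset.mem_of_mem_erase hmem)), mul_assoc]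
    rw [Finset.sum_congr rfl h2]
    ring

/-- The key exact identity, obtained by differentiating `jtp` at `-1`. -/
lemma main_exact (M : ℕ) (hM : 1 ≤ M) :
    (-1 : S) ^ (M + 1) * (Pq M * Pq (M - 1)) =
      ∑ m ∈ Finset.range (2 * M + 1),
        (-1 : S) ^ (m + 1) * (m : S) * (gb (2 * M) m * X ^ t M m) := by
  classical
  have h := congrArg (fun P : Polynomial S => Polynomial.eval (-1 : S) (Polynomial.derivative P))
    (jtp M hM)
  beta_reduce at h
  rw [Polynomial.derivative_mul, Polynomial.eval_add, Polynomial.eval_mul,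
    Polynomial.eval_mul] at h
  have hg0 : Polynomial.eval (-1 : S)
      (∏ j ∈ Finset.Icc 1 M, (Polynomial.X + Polynomial.C ((X : S) ^ (j - 1)))) = 0 := by
    rw [Polynomial.eval_prod]
    refine Finset.prod_eq_zero (Finset.mem_Icc.mpr ⟨le_refl 1, hM⟩) ?_
    simp
  have hf : Polynomial.eval (-1 : S)
      (∏ j ∈ Finset.Icc 1 M, (1 + Polynomial.C ((X : S) ^ j) * Polynomial.X)) = Pq M := by
    rw [Polynomial.eval_prod, Pq]
    refine Finset.prod_congr rfl fun j _ => ?_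
    simp
    ring
  have hg' : Polynomial.eval (-1 : S) (Polynomial.derivative
      (∏ j ∈ Finset.Icc 1 M, (Polynomial.X + Polynomial.C ((X : S) ^ (j - 1)))))
      = (-1 : S) ^ (M - 1) * Pq (M - 1) := by
    rw [derivative_finset_prod, Polynomial.eval_finset_sum]
    rw [Finset.sum_eq_single 1]
    · have he : (Finset.Icc 1 M).erase 1 = Finset.Icc 2 M := by
        ext x; simp [Finset.mem_erase, Finset.mem_Icc]; omega
      rw [he]
      simp only [Polynomial.derivative_add, Polynomial.derivative_X, Polynomial.derivative_C,
        add_zero, Polynomial.eval_mul, Polynomial.eval_one, mul_one, Polynomial.eval_prod]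
      have hIcc2 : Finset.Icc 2 M = Finset.Ico 2 (M + 1) := by
        ext x; simp [Finset.mem_Icc, Finset.mem_Ico]
      rw [hIcc2, Finset.prod_Ico_eq_prod_range]
      have hPq : Pq (M - 1) = ∏ k ∈ Finset.range (M + 1 - 2), (1 - (X : S) ^ (1 + k)) := by
        rw [Pq, show Finset.Icc 1 (M - 1) = Finset.Ico 1 M from by
          ext x; simp [Finset.mem_Icc, Finset.mem_Ico]; omega,
          Finset.prod_Ico_eq_prod_range]
        apply Finset.prod_congr (by congr 1) fun k _ => rfl
      have hterm : ∀ k ∈ Finset.range (M + 1 - 2),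
          Polynomial.eval (-1 : S) (Polynomial.X + Polynomial.C ((X : S) ^ (2 + k - 1)))
          = -1 * (1 - (X : S) ^ (1 + k)) := by
        intro k _
        rw [Polynomial.eval_add, Polynomial.eval_X, Polynomial.eval_C,
          show 2 + k - 1 = 1 + k from by omega]
        ring
      rw [Finset.prod_congr rfl hterm, Finset.prod_mul_distrib, Finset.prod_const,
        Finset.card_range, hPq, show M + 1 - 2 = M - 1 from by omega]
    · intro j hj hne
      rw [Finset.mem_Icc] at hj
      have h1mem : (1 : ℕ) ∈ (Finset.Icc 1 M).erase j :=
        Finset.mem_erase.mpr ⟨fun hh => hne (hh ▸ rfl), Finset.mem_Icc.mpr ⟨le_refl 1, hM⟩⟩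
      rw [Polynomial.eval_mul, Polynomial.eval_prod]
      rw [Finset.prod_eq_zero h1mem (by simp), zero_mul]
    · intro h1
      exact absurd (Finset.mem_Icc.mpr ⟨le_refl 1, hM⟩) h1
  rw [hg0, mul_zero, hf, zero_add, hg'] at h
  rw [Polynomial.derivative_sum, Polynomial.eval_finset_sum] at h
  have hterm : ∀ m ∈ Finset.range (2 * M + 1),
      Polynomial.eval (-1 : S) (Polynomial.derivative
        (Polynomial.C (gb (2 * M) m * X ^ t M m) * Polynomial.X ^ m))
      = (-1 : S) ^ (m + 1) * (m : S) * (gb (2 * M) m * X ^ t M m) := by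
    intro m _
    rw [Polynomial.derivative_C_mul_X_pow, Polynomial.eval_mul, Polynomial.eval_C,
      Polynomial.eval_pow, Polynomial.eval_X]
    cases m with
    | zero => simp
    | succ k =>
      rw [show k + 1 - 1 = k from rfl, show k + 1 + 1 = k + 2 from rfl, pow_add]
      push_cast
      ring
  rw [Finset.sum_congr rfl hterm] at h
  rw [← h]
  obtain ⟨M', rfl⟩ : ∃ M', M = M' + 1 := ⟨M - 1, by omega⟩
  rw [show M' + 1 + 1 = M' + 2 from rfl, show M' + 1 - 1 = M' from rfl, pow_add]
  ring

/-! ### Truncated congruences -/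

/-- equality of coefficients up to degree `N`. -/
def Meq (N : ℕ) (f g : S) : Prop := ∀ i ≤ N, coeff (R := R) i f = coeff (R := R) i g

lemma Meq.mul {N : ℕ} {f g f' g' : S} (h : Meq N f g) (h' : Meq N f' g') :
    Meq N (f * f') (g * g') := by
  intro i hi
  rw [coeff_mul, coeff_mul]
  apply Finset.sum_congr rfl
  rintro ⟨x, y⟩ hxy
  rw [Finset.HasAntidiagonal.mem_antidiagonal] at hxy
  rw [h x (by omega), h' y (by omega)]

lemma Meq_cancel {N : ℕ} {u v w : S} (hu : constantCoeff (R := R) u = 1)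
    (h : Meq N (u * v) (u * w)) : Meq N v w := by
  intro i hi
  induction i using Nat.strong_induction_on with
  | _ i ih =>
    have h1 := h i hi
    rw [coeff_mul, coeff_mul] at h1
    have hmem := Finset.HasAntidiagonal.mem_antidiagonal.2 (by simp : ((0 : ℕ), i).1 + ((0 : ℕ), i).2 = i)
    rw [← Finset.sum_erase_add _ _ hmem, ← Finset.sum_erase_add _ _ hmem] at h1
    have he : ∀ x ∈ (Finset.HasAntidiagonal.antidiagonal i).erase (0, i),
        coeff (R := R) x.1 u * coeff (R := R) x.2 v = coeff (R := R) x.1 u * coeff (R := R) x.2 w := by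
      rintro ⟨x, y⟩ hxy
      simp only [Finset.mem_erase, Finset.HasAntidiagonal.mem_antidiagonal, Ne, Prod.mk.injEq, not_and] at hxy
      have hy : y < i := by
        rcases hxy with ⟨hne, hsum⟩
        by_cases hx0 : x = 0
        · exact absurd (hne hx0) (by omega)
        · omega
      rw [ih y hy (by omega)]
    rw [Finset.sum_congr rfl he] at h1
    have h2 : coeff (R := R) 0 u * coeff (R := R) i v = coeff (R := R) 0 u * coeff (R := R) i w := by
      exact add_left_cancel h1
    simpa [coeff_zero_eq_constantCoeff, hu] using h2

lemma Meq_one_prod {N : ℕ} {s : Finset ℕ} (hs : ∀ j ∈ s, N < j) :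
    Meq N (∏ j ∈ s, (1 - X ^ j : S)) 1 := by
  classical
  induction s using Finset.induction_on with
  | empty => intro i hi; rfl
  | @insert a s' hx ih =>
    rw [Finset.prod_insert hx]
    have h1 : Meq N (1 - X ^ a : S) 1 := by
      intro i hi
      have ha := hs a (Finset.mem_insert_self a s')
      rw [map_sub, coeff_X_pow, if_neg (by omega), sub_zero]
    have h2 := ih (fun j hj => hs j (Finset.mem_insert_of_mem hj))
    have := h1.mul h2
    simpa using this

lemma Meq_Pq_le {N L L' : ℕ} (h : N ≤ L) (hLL : L ≤ L') : Meq N (Pq L) (Pq L') := by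
  have hsplit : Finset.Icc 1 L' = Finset.Icc 1 L ∪ Finset.Ioc L L' := by
    ext x
    simp only [Finset.mem_Icc, Finset.mem_union, Finset.mem_Ioc]
    omega
  have hdisj : Disjoint (Finset.Icc 1 L) (Finset.Ioc L L') := by
    rw [Finset.disjoint_left]
    intro a ha hb
    simp only [Finset.mem_Icc] at ha
    simp only [Finset.mem_Ioc] at hb
    omega
  have : Pq L' = Pq L * ∏ j ∈ Finset.Ioc L L', (1 - X ^ j : S) := by
    rw [Pq, Pq, hsplit, Finset.prod_union hdisj]
  rw [this]
  have h1 : Meq N (∏ j ∈ Finset.Ioc L L', (1 - X ^ j : S)) 1 :=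
    Meq_one_prod (fun j hj => by simp only [Finset.mem_Ioc] at hj; omega)
  have hrefl : Meq N (Pq L) (Pq L) := fun i hi => rfl
  intro i hi
  have := (Meq.mul hrefl h1) i hi
  rw [mul_one] at this
  exact this.symm

lemma Meq_Pq {N L L' : ℕ} (h : N ≤ L) (h' : N ≤ L') : Meq N (Pq L) (Pq L') := by
  rcases le_total L L' with hl | hl
  · exact Meq_Pq_le h hl
  · intro i hi
    exact ((Meq_Pq_le h' hl) i hi).symm

lemma Meq.refl {N : ℕ} (f : S) : Meq N f f := fun _ _ => rfl

lemma Meq.symm {N : ℕ} {f g : S} (h : Meq N f g) : Meq N g f := fun i hi => (h i hi).symm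

lemma Meq.trans {N : ℕ} {f g h : S} (h1 : Meq N f g) (h2 : Meq N g h) : Meq N f h :=
  fun i hi => (h1 i hi).trans (h2 i hi)

lemma Meq.of_eq {N : ℕ} {f g : S} (h : f = g) : Meq N f g := fun i _ => by rw [h]

lemma Meq.sum {N : ℕ} {ι : Type} {s : Finset ι} {f g : ι → S}
    (h : ∀ j ∈ s, Meq N (f j) (g j)) : Meq N (∑ j ∈ s, f j) (∑ j ∈ s, g j) := fun i hi => by
  rw [map_sum, map_sum]
  exact Finset.sum_congr rfl fun j hj => h j hj i hi

lemma coeff_X_pow_mul_zero {e i : ℕ} (h : i < e) (g : S) : coeff (R := R) i (X ^ e * g) = 0 := by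
  rw [coeff_mul]
  apply Finset.sum_eq_zero
  rintro ⟨a, b⟩ hab
  rw [Finset.HasAntidiagonal.mem_antidiagonal] at hab
  rw [coeff_X_pow, if_neg (by omega), zero_mul]

lemma constantCoeff_Pq (L : ℕ) : constantCoeff (R := R) (Pq L) = 1 := by
  rw [Pq, map_prod]
  apply Finset.prod_eq_one
  intro j hj
  rw [Finset.mem_Icc] at hj
  rw [map_sub, map_one, map_pow, constantCoeff_X, zero_pow (by omega), sub_zero]

lemma neg_one_pow_congr {a b : ℕ} (h : a % 2 = b % 2) : (-1 : S) ^ a = (-1 : S) ^ b := by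
  conv_lhs => rw [← Nat.div_add_mod a 2]
  conv_rhs => rw [← Nat.div_add_mod b 2]
  rw [pow_add, pow_add, pow_mul, pow_mul, h]
  norm_num

lemma t_ge_right {M m : ℕ} (h : M ≤ m) : m - M ≤ t M m := by
  rw [t, if_pos h]
  have := choose_two_mul' (m - M)
  have h2 : (m - M + 1) * (m - M) ≥ 2 * (m - M) := by
    have : m - M + 1 ≥ 2 ∨ m - M = 0 := by omega
    rcases this with h3 | h3
    · exact Nat.mul_le_mul_right _ h3
    · omega
  omega

lemma t_ge_left {M m : ℕ} (h : m < M) : M - m - 1 ≤ t M m := by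
  rw [t, if_neg (by omega)]
  obtain ⟨d, hd⟩ : ∃ d, M - m = d + 1 := ⟨M - m - 1, by omega⟩
  rw [hd]
  have := choose_two_mul' d
  have h2 : (d + 1) * d ≥ 2 * d ∨ d = 0 := by
    rcases Nat.eq_zero_or_pos d with h3 | h3
    · right; omega
    · left; exact Nat.mul_le_mul_right _ (by omega)
  omega

/-- Jacobi's identity, truncated: `Pq N ^ 3 ≡ ∑ (-1)^k (2k+1) X^{k(k+1)/2}`. -/
lemma jacobi_cube (N : ℕ) :
    Meq N ((Pq N) ^ 3)
      (∑ k ∈ Finset.range (2 * N + 2), (-1 : S) ^ k * ((2 * k + 1 : ℕ) : S) * X ^ (k + 1).choose 2) := by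
  classical
  set M : ℕ := 2 * N + 2 with hMdef
  have hM : 1 ≤ M := by omega
  set J : S := ∑ k ∈ Finset.range M,
      (-1 : S) ^ k * ((2 * k + 1 : ℕ) : S) * X ^ (k + 1).choose 2 with hJ
  set K : S := ∑ m ∈ Finset.range (2 * M + 1),
      (-1 : S) ^ (m + M) * (m : S) * X ^ (t M m) with hK
  -- gb ≈ lemma
  have hgb : ∀ m : ℕ, N + 1 ≤ m → m + (N + 1) ≤ 2 * M →
      Meq N (gb (2 * M) m * Pq N ^ 4) (Pq N ^ 3) := by
    intro m h1 h2
    have hp : gb (2 * M) m * Pq m * Pq (2 * M - m) = Pq (2 * M) := gb_mul_Pq (2 * M) m (by omega)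
    have step1 : Meq N (gb (2 * M) m * Pq N * Pq N) (gb (2 * M) m * Pq m * Pq (2 * M - m)) :=
      (Meq.mul (Meq.mul (Meq.refl _) (Meq_Pq (le_refl N) (by omega))) (Meq_Pq (le_refl N) (by omega)))
    have step2 : Meq N (gb (2 * M) m * Pq N * Pq N) (Pq N) :=
      step1.trans ((Meq.of_eq hp).trans (Meq_Pq (by omega) (le_refl N)))
    have step3 : Meq N (gb (2 * M) m * Pq N * Pq N * (Pq N * Pq N)) (Pq N * (Pq N * Pq N)) :=
      step2.mul (Meq.refl _)
    have e1 : gb (2 * M) m * Pq N ^ 4 = gb (2 * M) m * Pq N * Pq N * (Pq N * Pq N) := by ring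
    have e2 : Pq N ^ 3 = Pq N * (Pq N * Pq N) := by ring
    rw [e1, e2]
    exact step3
  -- terms with big exponent vanish
  have hbig : ∀ m : ℕ, ¬(N + 1 ≤ m ∧ m + (N + 1) ≤ 2 * M) → m ≤ 2 * M → N < t M m := by
    intro m hm hm2
    rcases le_or_gt M m with h | h
    · have := t_ge_right h
      omega
    · have := t_ge_left h
      omega
  -- Step B : Pq N ^ 6 ≈ Pq N ^ 3 * K
  have hE := main_exact M hM
  have hs : (-1 : S) ^ (M + 1) * (-1 : S) ^ (M + 1) = 1 := by
    rw [← mul_pow]; norm_num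
  have hE2 : Pq M * Pq (M - 1) = (-1 : S) ^ (M + 1) *
      ∑ m ∈ Finset.range (2 * M + 1),
        (-1 : S) ^ (m + 1) * (m : S) * (gb (2 * M) m * X ^ t M m) := by
    linear_combination ((-1 : S) ^ (M + 1)) * hE - (Pq M * Pq (M - 1)) * hs
  have h1 : Meq N (Pq N * Pq N) (Pq M * Pq (M - 1)) :=
    (Meq_Pq (le_refl N) (by omega)).mul (Meq_Pq (le_refl N) (by omega))
  have h2 : Meq N (Pq N ^ 4 * (Pq N * Pq N))
      (Pq N ^ 4 * (Pq M * Pq (M - 1))) := (Meq.refl _).mul h1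
  have e3 : Pq N ^ 4 * (Pq M * Pq (M - 1)) =
      ∑ m ∈ Finset.range (2 * M + 1),
        ((-1 : S) ^ (m + M) * (m : S) * X ^ t M m) * (gb (2 * M) m * Pq N ^ 4) := by
    rw [hE2, Finset.mul_sum, Finset.mul_sum]
    apply Finset.sum_congr rfl
    intro m hm
    rw [pow_add, pow_add, pow_add]
    ring
  have h4 : Meq N (∑ m ∈ Finset.range (2 * M + 1),
        ((-1 : S) ^ (m + M) * (m : S) * X ^ t M m) * (gb (2 * M) m * Pq N ^ 4))
      (∑ m ∈ Finset.range (2 * M + 1),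
        ((-1 : S) ^ (m + M) * (m : S) * X ^ t M m) * Pq N ^ 3) := by
    apply Meq.sum
    intro m hm
    rw [Finset.mem_range] at hm
    by_cases hcase : N + 1 ≤ m ∧ m + (N + 1) ≤ 2 * M
    · exact (Meq.refl _).mul (hgb m hcase.1 hcase.2)
    · have ht := hbig m hcase (by omega)
      intro i hi
      have z1 : ((-1 : S) ^ (m + M) * (m : S) * X ^ t M m) * (gb (2 * M) m * Pq N ^ 4)
          = X ^ t M m * ((-1 : S) ^ (m + M) * (m : S) * (gb (2 * M) m * Pq N ^ 4)) := by ring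
      have z2 : ((-1 : S) ^ (m + M) * (m : S) * X ^ t M m) * Pq N ^ 3
          = X ^ t M m * ((-1 : S) ^ (m + M) * (m : S) * Pq N ^ 3) := by ring
      rw [z1, z2, coeff_X_pow_mul_zero (by omega), coeff_X_pow_mul_zero (by omega)]
  have h5 : Meq N (Pq N ^ 6) (Pq N ^ 3 * K) := by
    have hL : Meq N (Pq N ^ 6) (Pq N ^ 4 * (Pq N * Pq N)) := Meq.of_eq (by ring)
    have hR : (∑ m ∈ Finset.range (2 * M + 1),
        ((-1 : S) ^ (m + M) * (m : S) * X ^ t M m) * Pq N ^ 3) = Pq N ^ 3 * K := by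
      rw [hK, Finset.mul_sum]
      apply Finset.sum_congr rfl
      intro m hm
      ring
    exact hL.trans (h2.trans ((Meq.of_eq e3).trans (h4.trans (Meq.of_eq hR))))
  -- Step C : K ≈ J
  have hC : Meq N K J := by
    have hsplit : K = (∑ m ∈ Finset.range (2 * M), (-1 : S) ^ (m + M) * (m : S) * X ^ (t M m))
        + (-1 : S) ^ (2 * M + M) * ((2 * M : ℕ) : S) * X ^ (t M (2 * M)) := by
      rw [hK, Finset.sum_range_succ]
    have hlast : ∀ i ≤ N, coeff (R := R) i
        ((-1 : S) ^ (2 * M + M) * ((2 * M : ℕ) : S) * X ^ (t M (2 * M))) = 0 := by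
      intro i hi
      have ht : N < t M (2 * M) := by
        have := t_ge_right (by omega : M ≤ 2 * M)
        omega
      rw [show (-1 : S) ^ (2 * M + M) * ((2 * M : ℕ) : S) * X ^ (t M (2 * M))
        = X ^ (t M (2 * M)) * ((-1 : S) ^ (2 * M + M) * ((2 * M : ℕ) : S)) from by ring]
      exact coeff_X_pow_mul_zero (by omega) _
    have hmain : (∑ m ∈ Finset.range (2 * M), (-1 : S) ^ (m + M) * (m : S) * X ^ (t M m)) = J := by
      rw [two_mul, Finset.sum_range_add]
      have hfst : (∑ m ∈ Finset.range M, (-1 : S) ^ (m + M) * (m : S) * X ^ (t M m))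
          = ∑ k ∈ Finset.range M, (-1 : S) ^ (k + 1) * ((M - 1 - k : ℕ) : S) * X ^ ((k + 1).choose 2) := by
        rw [← Finset.sum_range_reflect (fun m => (-1 : S) ^ (m + M) * (m : S) * X ^ (t M m)) M]
        apply Finset.sum_congr rfl
        intro k hk
        rw [Finset.mem_range] at hk
        have ht : t M (M - 1 - k) = (k + 1).choose 2 := by
          rw [t, if_neg (by omega), show M - (M - 1 - k) = k + 1 from by omega]
        have hsgn : (-1 : S) ^ (M - 1 - k + M) = (-1 : S) ^ (k + 1) := by
          apply neg_one_pow_congr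
          omega
        rw [ht, hsgn]
      have hsnd : (∑ k ∈ Finset.range M, (-1 : S) ^ (M + k + M) * ((M + k : ℕ) : S) * X ^ (t M (M + k)))
          = ∑ k ∈ Finset.range M, (-1 : S) ^ k * ((M + k : ℕ) : S) * X ^ ((k + 1).choose 2) := by
        apply Finset.sum_congr rfl
        intro k hk
        have ht : t M (M + k) = (k + 1).choose 2 := by
          rw [t, if_pos (by omega), show M + k - M + 1 = k + 1 from by omega]
        have hsgn : (-1 : S) ^ (M + k + M) = (-1 : S) ^ k := by
          apply neg_one_pow_congr
          omega
        rw [ht, hsgn]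
      rw [hfst, hsnd, ← Finset.sum_add_distrib, hJ]
      apply Finset.sum_congr rfl
      intro k hk
      rw [Finset.mem_range] at hk
      have hcast : ((M + k : ℕ) : S) = ((M - 1 - k : ℕ) : S) + ((2 * k + 1 : ℕ) : S) := by
        rw [← Nat.cast_add]
        congr 1
        omega
      rw [hcast, pow_add]
      ring
    intro i hi
    rw [hsplit, map_add, hlast i hi, add_zero, hmain]
  -- conclude by cancellation
  have h6 : Meq N (Pq N ^ 3 * (Pq N ^ 3)) (Pq N ^ 3 * J) := by
    have := h5.trans ((Meq.refl (Pq N ^ 3)).mul hC)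
    exact (Meq.of_eq (by ring : Pq N ^ 3 * Pq N ^ 3 = Pq N ^ 6)).trans this
  have hu : constantCoeff (R := R) (Pq N ^ 3) = 1 := by
    rw [map_pow, constantCoeff_Pq, one_pow]
  exact Meq_cancel hu h6

/-- Coefficients `≡ 5 mod 7` of `(Pq N)^6` vanish. -/
lemma coeff_Pq_six (N a : ℕ) (ha : a ≤ N) (ha7 : a % 7 = 5) :
    coeff (R := R) a ((Pq N) ^ 6) = 0 := by
  classical
  have hcube := jacobi_cube N
  set J : S := ∑ k ∈ Finset.range (2 * N + 2),
      (-1 : S) ^ k * ((2 * k + 1 : ℕ) : S) * X ^ (k + 1).choose 2 with hJ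
  have h6 : Meq N ((Pq N) ^ 6) (J * J) :=
    (Meq.of_eq (by ring : (Pq N) ^ 6 = (Pq N) ^ 3 * (Pq N) ^ 3)).trans (hcube.mul hcube)
  rw [h6 a ha, hJ, Finset.sum_mul_sum, map_sum]
  apply Finset.sum_eq_zero
  intro j hj
  rw [map_sum]
  apply Finset.sum_eq_zero
  intro k hk
  have hid : ((-1 : S) ^ j * ((2 * j + 1 : ℕ) : S) * X ^ (j + 1).choose 2) *
      ((-1 : S) ^ k * ((2 * k + 1 : ℕ) : S) * X ^ (k + 1).choose 2)
      = PowerSeries.C (R := R) ((-1 : R) ^ (j + k) * ((2 * j + 1 : ℕ) : R) * ((2 * k + 1 : ℕ) : R)) *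
        X ^ ((j + 1).choose 2 + (k + 1).choose 2) := by
    rw [map_mul, map_mul, map_pow, map_neg, map_one, map_natCast, map_natCast,
      pow_add, pow_add]
    ring
  rw [hid, coeff_C_mul_X_pow]
  split_ifs with he
  · suffices hz : ((2 * j + 1 : ℕ) : R) = 0 by rw [hz]; ring
    have e1 := choose_two_mul' j
    have e2 := choose_two_mul' k
    have k1 : (2 * j + 1) ^ 2 = 4 * ((j + 1) * j) + 1 := by ring
    have k2 : (2 * k + 1) ^ 2 = 4 * ((k + 1) * k) + 1 := by ring
    have hnat : (2 * j + 1) ^ 2 + (2 * k + 1) ^ 2 = 8 * a + 2 := by omega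
    have hdvd : (7 : ℕ) ∣ 8 * a + 2 := by omega
    have hcast0 : (((2 * j + 1) ^ 2 + (2 * k + 1) ^ 2 : ℕ) : R) = 0 := by
      rw [hnat]
      exact (ZMod.natCast_eq_zero_iff _ 7).mpr hdvd
    have hcast : ((2 * j + 1 : ℕ) : R) ^ 2 + ((2 * k + 1 : ℕ) : R) ^ 2 = 0 := by
      push_cast at hcast0 ⊢
      linear_combination hcast0
    have hz7 : ∀ u v : R, u ^ 2 + v ^ 2 = 0 → u = 0 := by decide
    exact hz7 _ _ hcast
  · rfl

/-- support on multiples of 7 -/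
def Sup7 (g : S) : Prop := ∀ k : ℕ, ¬ (7 ∣ k) → coeff (R := R) k g = 0

lemma Sup7.one : Sup7 (1 : S) := by
  intro k hk
  rw [coeff_one, if_neg (by omega)]

lemma Sup7.mul {f g : S} (hf : Sup7 f) (hg : Sup7 g) : Sup7 (f * g) := by
  intro k hk
  rw [coeff_mul]
  apply Finset.sum_eq_zero
  rintro ⟨x, y⟩ hxy
  rw [Finset.HasAntidiagonal.mem_antidiagonal] at hxy
  by_cases hx : 7 ∣ x
  · rw [hg y (by omega), mul_zero]
  · rw [hf x hx, zero_mul]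

lemma Sup7.prod {ι : Type} {s : Finset ι} {f : ι → S} (h : ∀ i ∈ s, Sup7 (f i)) :
    Sup7 (∏ i ∈ s, f i) := by
  classical
  induction s using Finset.induction_on with
  | empty => simpa using Sup7.one
  | @insert a s ha ih =>
    rw [Finset.prod_insert ha]
    exact (h a (Finset.mem_insert_self a s)).mul
      (ih fun i hi => h i (Finset.mem_insert_of_mem hi))

lemma Sup7.pow {f : S} (hf : Sup7 f) (n : ℕ) : Sup7 (f ^ n) := by
  induction n with
  | zero => simpa using Sup7.one
  | succ n ih => rw [pow_succ]; exact ih.mul hf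

lemma Sup7.inv {u v : S} (hu : Sup7 u) (hc : constantCoeff (R := R) u = 1) (huv : u * v = 1) :
    Sup7 v := by
  intro k hk
  induction k using Nat.strong_induction_on with
  | _ k ih =>
    have h1 : coeff (R := R) k (u * v) = coeff (R := R) k 1 := by rw [huv]
    rw [coeff_mul, coeff_one, if_neg (by omega)] at h1
    have hmem := Finset.HasAntidiagonal.mem_antidiagonal.2 (by simp : ((0 : ℕ), k).1 + ((0 : ℕ), k).2 = k)
    rw [← Finset.sum_erase_add _ _ hmem] at h1
    have hz : ∀ x ∈ (Finset.HasAntidiagonal.antidiagonal k).erase (0, k),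
        coeff (R := R) x.1 u * coeff (R := R) x.2 v = 0 := by
      rintro ⟨x, y⟩ hxy
      simp only [Finset.mem_erase, Finset.HasAntidiagonal.mem_antidiagonal, Ne, Prod.mk.injEq, not_and] at hxy
      have hy : y < k := by
        rcases hxy with ⟨hne, hsum⟩
        by_cases hx0 : x = 0
        · exact absurd (hne hx0) (by omega)
        · omega
      by_cases hdy : 7 ∣ y
      · have hdx : ¬ 7 ∣ x := by omega
        rw [hu x hdx, zero_mul]
      · rw [ih y hy hdy, mul_zero]
    rw [Finset.sum_eq_zero hz, zero_add] at h1
    simpa [coeff_zero_eq_constantCoeff, hc] using h1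

/-! ### Assembly -/

theorem key (N : ℕ) (hN : N % 7 = 5) : ((b 49 N : R) = 0) := by
  classical
  set s : Finset ℕ := (Finset.Icc 1 N).filter (fun i => ¬ 49 ∣ i) with hs
  set A : S := ∏ i ∈ s, indicatorSeries R {k | i ∣ k} with hA
  -- Step 1 : (b 49 N : R) = coeff N A
  have hspos : ∀ i ∈ s, 0 < i := by
    intro i hi
    rw [hs, Finset.mem_filter, Finset.mem_Icc] at hi
    omega
  have hP := partialGF_prop R N s hspos (fun _ => Set.univ) (fun i _ => trivial)
  have himg : ∀ i ∈ s, ((· * i) '' Set.univ) = {k | i ∣ k} := by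
    intro i _
    ext x
    simp only [Set.mem_image, Set.mem_univ, true_and, Set.mem_setOf_eq]
    constructor
    · rintro ⟨y, rfl⟩
      exact Dvd.intro_left y rfl
    · rintro ⟨c, rfl⟩
      exact ⟨c, mul_comm c i⟩
  rw [Finset.prod_congr rfl (fun i hi => by rw [himg i hi])] at hP
  rw [← hA] at hP
  have hcard : (b 49 N : ℕ) =
      #{q : Nat.Partition N | (∀ j, q.parts.count j ∈ (Set.univ : Set ℕ)) ∧
        ∀ j ∈ q.parts, j ∈ s} := by
    rw [b, Nat.card_eq_fintype_card, Fintype.card_subtype]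
    congr 1
    apply Finset.filter_congr
    intro q _
    simp only [Set.mem_univ, forall_const, true_and]
    constructor
    · intro h j hj
      have hj1 : 0 < j := q.parts_pos hj
      have hjN : j ≤ N := by
        simpa [q.parts_sum] using Multiset.single_le_sum (fun _ _ => Nat.zero_le _) _ hj
      rw [hs, Finset.mem_filter, Finset.mem_Icc]
      exact ⟨⟨hj1, hjN⟩, h j hj⟩
    · intro h i hi
      have := h i hi
      rw [hs, Finset.mem_filter] at this
      exact this.2
  have hbA : (b 49 N : R) = coeff (R := R) N A := by rw [hcard]; exact hP
  -- Step 2 : Pq N * A = Ψ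
  set Ψ : S := ∏ i ∈ (Finset.Icc 1 N).filter (fun i => 49 ∣ i), (1 - X ^ i) with hΨ
  have hone : ∀ i ∈ s, (1 - X ^ i : S) * indicatorSeries R {k | i ∣ k} = 1 := by
    intro i hi
    obtain ⟨i', rfl⟩ : ∃ i', i = i' + 1 := ⟨i - 1, by have := hspos i hi; omega⟩
    rw [← num_series']
    have hc : constantCoeff (R := R) (1 - X ^ (i' + 1)) ≠ 0 := by
      rw [map_sub, map_one, map_pow, constantCoeff_X, zero_pow (by omega), sub_zero]
      exact one_ne_zero
    exact PowerSeries.mul_inv_cancel _ hc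
  have hPA : Pq N * A = Ψ := by
    have hsplit : Pq N = (∏ i ∈ (Finset.Icc 1 N).filter (fun i => 49 ∣ i), (1 - X ^ i : S)) *
        ∏ i ∈ s, (1 - X ^ i : S) := by
      rw [Pq, hs, ← Finset.prod_filter_mul_prod_filter_not (Finset.Icc 1 N) (fun i => 49 ∣ i)]
    rw [hsplit, hA, mul_assoc, ← Finset.prod_mul_distrib,
      Finset.prod_congr rfl hone, Finset.prod_const_one, mul_one, hΨ]
  -- Step 3 : Ψ = Θ ^ 7 with Θ supported on multiples of 7
  set Θ : S := ∏ m ∈ Finset.Icc 1 (N / 49), (1 - X ^ (7 * m)) with hΘ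
  have hchar : ∀ c : ℕ, (1 - X ^ (7 * c) : S) ^ 7 = 1 - X ^ (49 * c) := by
    intro c
    have := sub_pow_char (p := 7) (1 : S) (X ^ (7 * c))
    rw [one_pow, ← pow_mul] at this
    rw [this]
    congr 2
    omega
  have hΨΘ : Ψ = Θ ^ 7 := by
    have hindex : (Finset.Icc 1 N).filter (fun i => 49 ∣ i)
        = (Finset.Icc 1 (N / 49)).image (fun m => 49 * m) := by
      ext x
      simp only [Finset.mem_filter, Finset.mem_Icc, Finset.mem_image]
      constructor
      · rintro ⟨⟨h1, h2⟩, c, rfl⟩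
        exact ⟨c, ⟨by omega, by omega⟩, rfl⟩
      · rintro ⟨c, ⟨h1, h2⟩, rfl⟩
        exact ⟨⟨by omega, by omega⟩, ⟨c, rfl⟩⟩
    rw [hΨ, hindex, Finset.prod_image (fun a _ c _ h => by omega), hΘ, ← Finset.prod_pow]
    apply Finset.prod_congr rfl
    intro c _
    rw [hchar]
  have hΘ7 : Sup7 Θ := by
    rw [hΘ]
    apply Sup7.prod
    intro m _
    intro k hk
    rw [map_sub, coeff_one, coeff_X_pow, if_neg (by omega), if_neg (by omega), sub_zero]
  have hΨ7 : Sup7 Ψ := by rw [hΨΘ]; exact hΘ7.pow 7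
  -- Step 4 : Γ = Pq N ^ 7 is supported on multiples of 7, and its inverse V too
  set Γ : S := (Pq N) ^ 7 with hΓ
  have hΓalt : Γ = ∏ i ∈ Finset.Icc 1 N, (1 - X ^ (7 * i)) := by
    rw [hΓ, Pq, ← Finset.prod_pow]
    apply Finset.prod_congr rfl
    intro i _
    have := sub_pow_char (p := 7) (1 : S) (X ^ i)
    rw [one_pow, ← pow_mul] at this
    rw [this, Nat.mul_comm i 7]
  have hΓ7 : Sup7 Γ := by
    rw [hΓalt]
    apply Sup7.prod
    intro m _ k hk
    rw [map_sub, coeff_one, coeff_X_pow, if_neg (by omega), if_neg (by omega), sub_zero]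
  have hΓc : constantCoeff (R := R) Γ = 1 := by rw [hΓ, map_pow, constantCoeff_Pq, one_pow]
  set V : S := Γ⁻¹ with hV
  have hΓV : Γ * V = 1 := PowerSeries.mul_inv_cancel _ (by rw [hΓc]; exact one_ne_zero)
  have hV7 : Sup7 V := hΓ7.inv hΓc hΓV
  -- Step 5 : A = Pq N ^ 6 * (V * Ψ)
  have hAeq : A = Pq N ^ 6 * (V * Ψ) := by
    have h1 : Pq N ^ 6 * (V * Ψ) = Pq N ^ 6 * (V * (Pq N * A)) := by rw [hPA]
    have h2 : Pq N ^ 6 * (V * (Pq N * A)) = (Γ * V) * A := by rw [hΓ]; ring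
    rw [h1, h2, hΓV, one_mul]
  -- Step 6 : conclude
  rw [hbA, hAeq, coeff_mul]
  apply Finset.sum_eq_zero
  rintro ⟨x, y⟩ hxy
  rw [Finset.HasAntidiagonal.mem_antidiagonal] at hxy
  by_cases hy : 7 ∣ y
  · have hx7 : x % 7 = 5 := by omega
    rw [coeff_Pq_six N x (by omega) hx7, zero_mul]
  · rw [(hV7.mul hΨ7) y hy, mul_zero]
end

end Aux13

theorem stmt13 : ∀ n : ℕ, 7 ∣ b 49 (7 * (n + 1) - 2) := by
  intro n
  have h : 7 * (n + 1) - 2 = 7 * n + 5 := by omega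
  have := Aux13.key (7 * n + 5) (by omega)
  rw [h]
  exact (ZMod.natCast_eq_zero_iff _ 7).mp this
end

section
/- p(243) is not divisible by 343 = 7^3, where p denotes the partition function; hence Ramanujan's original conjecture p(7^β n + δ_{7,β}) ≡ 0 (mod 7^β) fails for β = 3 (since 24·243 ≡ 1 (mod 7^3)). -/
open PowerSeries

/-- `P17 k n` = number of partitions of `n` into parts of size `≤ k`. -/
def P17 : ℕ → ℕ → ℕ
  | 0, 0 => 1
  | 0, _+1 => 0
  | k+1, n => P17 k n + if _ : k + 1 ≤ n then P17 (k+1) (n - (k+1)) else 0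
termination_by k n => (k, n)

lemma P17_zero (n : ℕ) : P17 0 n = if n = 0 then 1 else 0 := by
  cases n <;> simp [P17]

lemma P17_succ (k n : ℕ) :
    P17 (k+1) n = P17 k n + if k + 1 ≤ n then P17 (k+1) (n - (k+1)) else 0 := by
  rw [P17]; split <;> simp_all

def A17 (k n : ℕ) : Finset (Nat.Partition n) :=
  Finset.univ.filter fun q => ∀ i ∈ q.parts, i ≤ k

lemma parts_eq_zero17 (q : Nat.Partition 0) : q.parts = 0 := by
  rw [Multiset.eq_zero_iff_forall_notMem]
  intro i hi
  have h1 := q.parts_pos hi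
  have h2 := Multiset.single_le_sum (fun x _ => Nat.zero_le x) i hi
  rw [q.parts_sum] at h2
  omega

lemma card_A17 (k n : ℕ) : (A17 k n).card = P17 k n := by
  induction k, n using P17.induct with
  | case1 =>
      rw [show P17 0 0 = 1 by simp [P17_zero], Finset.card_eq_one]
      refine ⟨⟨0, by simp, rfl⟩, ?_⟩
      ext q
      simp only [A17, Finset.mem_filter, Finset.mem_univ, true_and, Finset.mem_singleton]
      constructor
      · intro _
        exact Nat.Partition.ext (parts_eq_zero17 q)
      · rintro rfl
        intro i hi
        simp at hi
  | case2 n =>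
      rw [show P17 0 (n+1) = 0 by simp [P17_zero], Finset.card_eq_zero,
        Finset.eq_empty_iff_forall_notMem]
      intro q hq
      simp only [A17, Finset.mem_filter, Finset.mem_univ, true_and] at hq
      have h0 : q.parts = 0 := Multiset.eq_zero_iff_forall_notMem.mpr fun i hi => by
        have := q.parts_pos hi; have := hq i hi; omega
      have := q.parts_sum
      rw [h0] at this
      simp at this
  | case3 k n ih1 ih2 =>
      classical
      set B : Finset (Nat.Partition n) :=
        Finset.univ.filter (fun q => (∀ i ∈ q.parts, i ≤ k + 1) ∧ (k+1) ∈ q.parts) with hB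
      have hsplit : A17 (k+1) n = A17 k n ∪ B := by
        ext q
        simp only [A17, hB, Finset.mem_union, Finset.mem_filter, Finset.mem_univ, true_and]
        constructor
        · intro h
          by_cases hm : (k+1) ∈ q.parts
          · exact Or.inr ⟨h, hm⟩
          · refine Or.inl fun i hi => ?_
            have h1 := h i hi
            have h2 : i ≠ k + 1 := fun e => hm (e ▸ hi)
            omega
        · rintro (h | ⟨h, _⟩)
          · exact fun i hi => (h i hi).trans (Nat.le_succ k)
          · exact h
      have hdisj : Disjoint (A17 k n) B := by
        rw [Finset.disjoint_left]
        intro q hq hq'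
        simp only [A17, hB, Finset.mem_filter, Finset.mem_univ, true_and] at hq hq'
        have := hq _ hq'.2
        omega
      have hBcard : B.card = if k + 1 ≤ n then P17 (k+1) (n - (k+1)) else 0 := by
        by_cases h : k + 1 ≤ n
        · rw [if_pos h, ← ih2 h]
          apply Finset.card_bij
            (i := fun q hq =>
              (⟨q.parts.erase (k+1),
                fun hi => q.parts_pos (Multiset.mem_of_mem_erase hi), by
                  have hm : (k+1) ∈ q.parts := by
                    simp only [hB, Finset.mem_filter, Finset.mem_univ, true_and] at hq
                    exact hq.2
                  have hc := Multiset.cons_erase hm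
                  have h2 : ((k+1) ::ₘ q.parts.erase (k+1)).sum = n := by
                    rw [hc, q.parts_sum]
                  rw [Multiset.sum_cons] at h2
                  omega⟩ : Nat.Partition (n - (k+1))))
          · intro q hq
            simp only [hB, A17, Finset.mem_filter, Finset.mem_univ, true_and] at hq ⊢
            intro i hi
            exact hq.1 i (Multiset.mem_of_mem_erase hi)
          · intro q1 h1 q2 h2 heq
            simp only [hB, Finset.mem_filter, Finset.mem_univ, true_and] at h1 h2
            have e := congrArg Nat.Partition.parts heq
            simp only at e
            apply Nat.Partition.ext
            rw [← Multiset.cons_erase h1.2, ← Multiset.cons_erase h2.2, e]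
          · intro r hr
            simp only [A17, Finset.mem_filter, Finset.mem_univ, true_and] at hr
            refine ⟨⟨(k+1) ::ₘ r.parts, ?_, ?_⟩, ?_, ?_⟩
            · intro i hi
              rcases Multiset.mem_cons.mp hi with rfl | hi
              · omega
              · exact r.parts_pos hi
            · rw [Multiset.sum_cons, r.parts_sum]
              omega
            · simp only [hB, Finset.mem_filter, Finset.mem_univ, true_and]
              constructor
              · intro i hi
                rcases Multiset.mem_cons.mp hi with rfl | hi
                · exact le_rfl
                · exact hr i hi
              · exact Multiset.mem_cons_self _ _
            · apply Nat.Partition.ext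
              simp [Multiset.erase_cons_head]
        · rw [if_neg h, Finset.card_eq_zero, Finset.eq_empty_iff_forall_notMem]
          intro q hq
          simp only [hB, Finset.mem_filter, Finset.mem_univ, true_and] at hq
          have h2 := Multiset.single_le_sum (fun x _ => Nat.zero_le x) _ hq.2
          rw [q.parts_sum] at h2
          omega
      rw [hsplit, Finset.card_union_of_disjoint hdisj, ih1, hBcard]
      rw [show P17 k.succ n = _ from P17_succ k n]

/- ## Fast evaluation of `P17` via a list-based dynamic program -/

def chunks17 (k : ℕ) : ℕ → List ℕ → List ℕ → List ℕ
  | 0, _, _ => []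
  | _+1, _, [] => []
  | fuel+1, prev, o :: os =>
    let c := List.zipWith (· + ·) ((o :: os).take (k+1)) prev
    c ++ chunks17 k fuel c ((o :: os).drop (k+1))

lemma chunks17_length (k : ℕ) :
    ∀ fuel, ∀ prev old : List ℕ, old.length ≤ fuel → prev.length = k + 1 →
      (chunks17 k fuel prev old).length = old.length := by
  intro fuel
  induction fuel with
  | zero =>
      intro prev old hf _
      have : old = [] := List.eq_nil_of_length_eq_zero (by omega)
      subst this
      rfl
  | succ fuel ihf =>
      intro prev old hf hp
      match old with
      | [] => rfl
      | o :: os =>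
        set c : List ℕ := List.zipWith (· + ·) ((o :: os).take (k+1)) prev with hcdef
        have heq : chunks17 k (fuel+1) prev (o :: os)
            = c ++ chunks17 k fuel c ((o :: os).drop (k+1)) := rfl
        have hc : c.length = min (os.length + 1) (k + 1) := by
          rw [hcdef]
          simp [hp]
          omega
        rw [heq, List.length_append]
        by_cases hlen : os.length + 1 ≤ k + 1
        · have hd : (o :: os).drop (k+1) = [] :=
            List.drop_eq_nil_of_le (by simpa using hlen)
          rw [hd, show chunks17 k fuel c [] = [] from by cases fuel <;> rfl]
          simp only [List.length_nil, List.length_cons]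
          omega
        · have hc' : c.length = k + 1 := by omega
          rw [ihf c _ (by simp only [List.length_drop, List.length_cons] at *; omega) hc']
          simp only [List.length_drop, List.length_cons]
          omega

lemma chunks17_getD (k : ℕ) :
    ∀ fuel, ∀ prev old : List ℕ, old.length ≤ fuel → prev.length = k + 1 →
      ∀ n, n < old.length →
      (chunks17 k fuel prev old).getD n 0 =
        old.getD n 0 + (if n < k + 1 then prev.getD n 0
          else (chunks17 k fuel prev old).getD (n - (k+1)) 0) := by
  intro fuel
  induction fuel with
  | zero =>
      intro prev old hf _ n hn
      omega
  | succ fuel ihf =>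
      intro prev old hf hp n hn
      match old with
      | [] => simp at hn
      | o :: os =>
        set c : List ℕ := List.zipWith (· + ·) ((o :: os).take (k+1)) prev with hcdef
        have heq : chunks17 k (fuel+1) prev (o :: os)
            = c ++ chunks17 k fuel c ((o :: os).drop (k+1)) := rfl
        have hc : c.length = min (os.length + 1) (k + 1) := by
          rw [hcdef]
          simp [hp]
          omega
        have hfd : ((o :: os).drop (k+1)).length ≤ fuel := by
          simp only [List.length_drop, List.length_cons] at *
          omega
        have hget : ∀ m, m < c.length →
            c.getD m 0 = (o :: os).getD m 0 + prev.getD m 0 := by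
          intro m hm
          have hm2 : m < prev.length := by omega
          have hm3 : m < (o :: os).length := by
            simp only [List.length_cons]; omega
          have hm1 : m < ((o :: os).take (k+1)).length := by
            simp only [List.length_take, List.length_cons]; omega
          rw [List.getD_eq_getElem _ _ hm, List.getD_eq_getElem _ _ hm2,
            List.getD_eq_getElem _ _ hm3]
          show (List.zipWith (· + ·) ((o :: os).take (k+1)) prev)[m]'_ = _
          rw [List.getElem_zipWith]
          rw [List.getElem_take]
        rw [heq]
        by_cases hnk : n < k + 1
        · have hnc : n < c.length := by
            simp only [List.length_cons] at hn; omega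
          rw [if_pos hnk, List.getD_append _ _ _ _ hnc, hget n hnc]
        · have hcl : c.length = k + 1 := by
            simp only [List.length_cons] at hn; omega
          rw [if_neg hnk, List.getD_append_right _ _ _ _ (by omega)]
          have hdl : n - c.length < ((o :: os).drop (k+1)).length := by
            simp only [List.length_drop, List.length_cons]
            simp only [List.length_cons] at hn
            omega
          rw [ihf c _ hfd hcl (n - c.length) hdl]
          have hdrop : ((o :: os).drop (k+1)).getD (n - c.length) 0
              = (o :: os).getD n 0 := by
            rw [List.getD_eq_getElem _ _ hdl,
              List.getD_eq_getElem _ _ (by simpa using hn), List.getElem_drop]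
            congr 1
            omega
          rw [hdrop]
          congr 1
          simp only [hcl]
          by_cases h2 : n - (k + 1) < k + 1
          · rw [if_pos h2, List.getD_append _ _ _ _ (by omega)]
          · rw [if_neg h2, List.getD_append_right _ _ _ _ (by omega), hcl]

def rows17 (N : ℕ) : ℕ → List ℕ
  | 0 => 1 :: List.replicate N 0
  | k+1 => chunks17 k (N+1) (List.replicate (k+1) 0) (rows17 N k)

lemma rows17_spec (N : ℕ) :
    ∀ k, (rows17 N k).length = N + 1 ∧
      ∀ n ≤ N, (rows17 N k).getD n 0 = P17 k n := by
  intro k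
  induction k with
  | zero =>
      constructor
      · simp [rows17]
      · intro n hn
        rw [P17_zero]
        cases n with
        | zero => rfl
        | succ m =>
            rw [if_neg (Nat.succ_ne_zero m)]
            show (List.replicate N (0:ℕ)).getD m 0 = 0
            by_cases hm : m < N
            · rw [List.getD_eq_getElem _ _ (by simpa using hm)]
              simp
            · rw [List.getD_eq_default]
              simp
              omega
  | succ k ih =>
      have hrep : (List.replicate (k+1) (0:ℕ)).length = k + 1 := by simp
      have hrw : rows17 N (k+1) = chunks17 k (N+1) (List.replicate (k+1) 0) (rows17 N k) := by
        rw [rows17]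
      have hlen : (rows17 N (k+1)).length = N + 1 := by
        rw [hrw, chunks17_length k (N+1) _ _ (by rw [ih.1]) hrep, ih.1]
      refine ⟨hlen, ?_⟩
      intro n
      induction n using Nat.strong_induction_on with
      | _ n IH =>
        intro hn
        have hn' : n < (rows17 N k).length := by rw [ih.1]; omega
        have key := chunks17_getD k (N+1) (List.replicate (k+1) 0) (rows17 N k) (by rw [ih.1]) hrep n hn'
        rw [← hrw] at key
        rw [hrw] at key
        rw [hrw, key, ih.2 n hn, P17_succ]
        by_cases hnk : n < k + 1
        · rw [if_pos hnk, if_neg (by omega), List.getD_eq_getElem _ _ (by simpa using hnk)]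
          simp
        · rw [if_neg hnk, if_pos (by omega), ← hrw,
            IH (n - (k+1)) (by omega) (by omega)]

lemma p_eq_P17 (n : ℕ) : p n = P17 n n := by
  rw [p, Nat.card_eq_fintype_card, ← Finset.card_univ, ← card_A17 n n]
  congr 1
  rw [A17, Finset.filter_true_of_mem]
  intro q _ i hi
  have h2 := Multiset.single_le_sum (fun x _ => Nat.zero_le x) i hi
  rw [q.parts_sum] at h2
  exact h2

set_option maxRecDepth 100000 in
set_option maxHeartbeats 4000000 in
lemma P17_val : P17 243 243 = 133978259344888 := by
  have h := (rows17_spec 243 243).2 243 le_rfl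
  rw [← h]
  decide

theorem stmt17 : ¬ (343 ∣ p 243) := by
  rw [p_eq_P17 243, P17_val]
  decide
end
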